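/- arXiv:2203.07280 — 7 statements merged into one kernel-verified Lean document; each statement's English description precedes it below -/
import Mathlib

section
/- If G is a connected multigraph with E edges that has exactly one vertex of degree 1, then G can be made Eulerian by duplicating at most E-1 of its edges. -/
/-- A multigraph on vertex type `V`: a multiset of (undirected) edges,
possibly with parallel edges and loops. -/
structure Multigraph (V : Type*) where
  edges : Multiset (Sym2 V)

namespace Multigraph

variable {V : Type*} [DecidableEq V]

/-- The degree of a vertex: each non-loop edge containing it counts once,
each loop at it counts twice. -/
def degree (G : Multigraph V) (v : V) : ℕ :=
  (G.edges.map (fun e => if e = s(v, v) then 2 else if v ∈ e then 1 else 0)).sum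

/-- The underlying simple graph: `u` adjacent to `v` iff some edge joins them. -/
def toSimple (G : Multigraph V) : SimpleGraph V where
  Adj u v := u ≠ v ∧ s(u, v) ∈ G.edges
  symm := by
    constructor
    intro u v h
    exact ⟨h.1.symm, by rw [Sym2.eq_swap]; exact h.2⟩
  loopless := by constructor; intro v h; exact h.1 rfl

/-- A multigraph is connected if its underlying simple graph is connected. -/
def Connected (G : Multigraph V) : Prop := G.toSimple.Connected

/-- A multigraph is Eulerian if it is connected and every vertex has even degree. -/
def Eulerian (G : Multigraph V) : Prop :=
  G.Connected ∧ ∀ v : V, Even (G.degree v)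

end Multigraph

namespace MGAux

open Multigraph

variable {V : Type*} [DecidableEq V]

lemma degree_mk (S : Multiset (Sym2 V)) (v : V) :
    (Multigraph.mk S).degree v
      = (S.map (fun e => if e = s(v, v) then 2 else if v ∈ e then 1 else 0)).sum := rfl

lemma degree_add (A B : Multiset (Sym2 V)) (v : V) :
    (Multigraph.mk (A + B)).degree v
      = (Multigraph.mk A).degree v + (Multigraph.mk B).degree v := by
  simp [degree_mk, Multiset.map_add]

lemma f_eq (v a b : V) :
    (if s(a, b) = s(v, v) then 2 else if v ∈ s(a, b) then 1 else 0 : ℕ)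
      = (if v = a then 1 else 0) + (if v = b then 1 else 0) := by
  obtain rfl | ha := eq_or_ne v a
  · obtain rfl | hb := eq_or_ne v b
    · simp
    · simp [Sym2.eq_iff, Sym2.mem_iff, hb, Ne.symm hb]
  · obtain rfl | hb := eq_or_ne v b
    · simp [Sym2.eq_iff, Sym2.mem_iff, ha, Ne.symm ha]
    · simp [Sym2.eq_iff, Sym2.mem_iff, ha, hb, Ne.symm ha, Ne.symm hb]

lemma sum_f [Fintype V] (e : Sym2 V) :
    ∑ v : V, (if e = s(v, v) then 2 else if v ∈ e then 1 else 0 : ℕ) = 2 := by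
  induction e using Sym2.ind with
  | _ a b =>
    simp only [f_eq]
    rw [Finset.sum_add_distrib]
    simp [Finset.sum_ite_eq']

lemma handshake [Fintype V] (S : Multiset (Sym2 V)) :
    ∑ v : V, (Multigraph.mk S).degree v = 2 * Multiset.card S := by
  induction S using Multiset.induction with
  | empty => simp [degree_mk]
  | cons e s ih =>
    have h : ∀ v : V, (Multigraph.mk (e ::ₘ s)).degree v
        = (if e = s(v, v) then 2 else if v ∈ e then 1 else 0) + (Multigraph.mk s).degree v := by
      intro v; simp [degree_mk]
    simp only [h]
    rw [Finset.sum_add_distrib, sum_f, ih, Multiset.card_cons, Nat.mul_add]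
    omega

lemma one_le_degree {S : Multiset (Sym2 V)} {v : V} {e : Sym2 V}
    (he : e ∈ S) (hv : v ∈ e) : 1 ≤ (Multigraph.mk S).degree v := by
  have hmem : (if e = s(v, v) then 2 else if v ∈ e then 1 else 0 : ℕ)
      ∈ S.map (fun e => if e = s(v, v) then 2 else if v ∈ e then 1 else 0) :=
    Multiset.mem_map_of_mem _ he
  have h1 : 1 ≤ (if e = s(v, v) then 2 else if v ∈ e then 1 else 0 : ℕ) := by
    by_cases h1 : e = s(v, v)
    · simp [h1]
    · simp [h1, hv]
  exact le_trans h1 (Multiset.single_le_sum (fun x _ => Nat.zero_le x) _ hmem)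

lemma degree_eq_countP {S : Multiset (Sym2 V)} (hl : ∀ a : V, s(a, a) ∉ S) (v : V) :
    (Multigraph.mk S).degree v = S.countP (fun e => v ∈ e) := by
  induction S using Multiset.induction with
  | empty => simp [degree_mk]
  | cons e s ih =>
    have hne : e ≠ s(v, v) := by
      intro h; exact hl v (h ▸ Multiset.mem_cons_self e s)
    have hl' : ∀ a : V, s(a, a) ∉ s := fun a ha => hl a (Multiset.mem_cons_of_mem ha)
    rw [degree_mk, Multiset.map_cons, Multiset.sum_cons, Multiset.countP_cons, if_neg hne,
      ← degree_mk, ih hl']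
    by_cases hv : v ∈ e <;> simp [hv] <;> omega

lemma toSimple_mono {A B : Multiset (Sym2 V)} (h : A ≤ B) :
    (Multigraph.mk A).toSimple ≤ (Multigraph.mk B).toSimple := by
  intro u v huv
  exact ⟨huv.1, Multiset.mem_of_le h huv.2⟩

end MGAux

open MGAux

/-- If a connected multigraph with `E` edges has exactly one vertex of degree 1,
then it can be made Eulerian by duplicating at most `E - 1` of its edges. -/
theorem stmt_1 {V : Type*} [Fintype V] [DecidableEq V]
    (G : Multigraph V) (hconn : G.Connected)
    (hdeg : ∃! v : V, G.degree v = 1) :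
    ∃ D : Multiset (Sym2 V), D ≤ G.edges ∧
      Multiset.card D ≤ Multiset.card G.edges - 1 ∧
      (Multigraph.mk (G.edges + D)).Eulerian := by
  classical
  obtain ⟨v0, hv0, huniq⟩ := hdeg
  have hGmk : Multigraph.mk G.edges = G := rfl
  have key : ∃ S : Multiset (Sym2 V), S ≤ G.edges ∧ 1 ≤ Multiset.card S ∧
      ∀ v, Even ((Multigraph.mk S).degree v) := by
    by_cases hloop : ∃ a : V, s(a, a) ∈ G.edges
    · obtain ⟨a, ha⟩ := hloop
      refine ⟨{s(a, a)}, Multiset.singleton_le.mpr ha, by simp, ?_⟩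
      intro v
      by_cases hva : v = a
      · subst hva; simp [degree_mk]
      · have : s(a, a) ≠ s(v, v) := by simp [Sym2.eq_iff]; tauto
        have hvm : v ∉ s(a, a) := by simp [Sym2.mem_iff]; tauto
        simp [degree_mk, this, hvm]
    · by_cases hmult : ∃ e, 2 ≤ G.edges.count e
      · obtain ⟨e, he⟩ := hmult
        refine ⟨Multiset.replicate 2 e, Multiset.le_count_iff_replicate_le.mp he, by simp, ?_⟩
        intro v
        have : (Multigraph.mk (Multiset.replicate 2 e)).degree v
            = (if e = s(v, v) then 2 else if v ∈ e then 1 else 0)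
              + (if e = s(v, v) then 2 else if v ∈ e then 1 else 0) := by
          simp [degree_mk, Multiset.map_replicate, Multiset.sum_replicate, two_nsmul]
        rw [this]
        exact ⟨_, rfl⟩
      · push_neg at hloop hmult
        have hm : ∀ e, G.edges.count e ≤ 1 := fun e => by have := hmult e; omega
        have hnoac : ¬ G.toSimple.IsAcyclic := by
          intro hac
          have htree : G.toSimple.IsTree := ⟨hconn, hac⟩
          have hcard : G.toSimple.edgeFinset.card + 1 = Fintype.card V :=
            htree.card_edgeFinset
          have hfs : G.edges.toFinset = G.toSimple.edgeFinset := by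
            ext e
            induction e using Sym2.ind with
            | _ a b =>
              simp only [Multiset.mem_toFinset, SimpleGraph.mem_edgeFinset,
                SimpleGraph.mem_edgeSet]
              constructor
              · intro h
                have hab : a ≠ b := by
                  intro hh; subst hh; exact hloop a h
                exact ⟨hab, h⟩
              · intro h; exact h.2
          have hnodup : G.edges.Nodup := Multiset.nodup_iff_count_le_one.mpr hm
          have hE : Multiset.card G.edges = G.toSimple.edgeFinset.card := by
            rw [← hfs, Multiset.toFinset_card_of_nodup hnodup]
          have hsum : ∑ v : V, G.degree v = 2 * Multiset.card G.edges := handshake _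
          have hge : ∀ u : V, u ≠ v0 → 2 ≤ G.degree u := by
            intro u hu
            have h1 : 1 ≤ G.degree u := by
              obtain ⟨p⟩ := hconn.preconnected u v0
              cases p with
              | nil => exact absurd rfl hu
              | cons h p =>
                exact one_le_degree h.2 (Sym2.mem_mk_left _ _)
            have h2 : G.degree u ≠ 1 := fun h => hu (huniq u h)
            omega
          have hsplit : G.degree v0 + ∑ x ∈ Finset.univ.erase v0, G.degree x
              = ∑ x : V, G.degree x :=
            Finset.add_sum_erase Finset.univ G.degree (Finset.mem_univ v0)
          have hlow : (Finset.univ.erase v0).card * 2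
              ≤ ∑ x ∈ Finset.univ.erase v0, G.degree x := by
            have := Finset.card_nsmul_le_sum (Finset.univ.erase v0) G.degree 2
              (fun x hx => hge x (Finset.ne_of_mem_erase hx))
            simpa [smul_eq_mul] using this
          have hce : (Finset.univ.erase v0).card = Fintype.card V - 1 := by
            rw [Finset.card_erase_of_mem (Finset.mem_univ v0), Finset.card_univ]
          have hpos : 1 ≤ Fintype.card V := Fintype.card_pos_iff.mpr ⟨v0⟩
          omega
        rw [SimpleGraph.IsAcyclic] at hnoac
        push_neg at hnoac
        obtain ⟨u, c, hc⟩ := hnoac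
        have hsub : ∀ e ∈ c.edges, e ∈ G.edges := by
          intro e he
          have := c.edges_subset_edgeSet he
          induction e using Sym2.ind with
          | _ a b => exact this.2
        refine ⟨(c.edges : Multiset (Sym2 V)), ?_, ?_, ?_⟩
        · rw [Multiset.le_iff_count]
          intro e
          by_cases he : e ∈ c.edges
          · have h1 : (c.edges : Multiset (Sym2 V)).count e ≤ 1 := by
              rw [Multiset.coe_count]
              exact List.nodup_iff_count_le_one.mp hc.edges_nodup e
            have h2 : 1 ≤ G.edges.count e := Multiset.one_le_count_iff_mem.mpr (hsub e he)
            omega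
          · have : (c.edges : Multiset (Sym2 V)).count e = 0 := by
              rw [Multiset.coe_count]
              exact List.count_eq_zero.mpr he
            omega
        · rw [Multiset.coe_card, SimpleGraph.Walk.length_edges]
          have := hc.three_le_length
          omega
        · intro v
          have hl : ∀ a : V, s(a, a) ∉ (c.edges : Multiset (Sym2 V)) := by
            intro a ha
            have := c.edges_subset_edgeSet (by simpa using ha)
            exact G.toSimple.not_isDiag_of_mem_edgeSet this (Sym2.mk_isDiag_iff.mpr rfl)
          rw [degree_eq_countP hl]
          have : ((c.edges : Multiset (Sym2 V)).countP (fun e => v ∈ e))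
              = c.edges.countP (fun e => v ∈ e) := by
            simp [Multiset.coe_countP]
          rw [this]
          exact (hc.isTrail.even_countP_edges_iff v).mpr (fun h => absurd rfl h)
  obtain ⟨S, hSle, hScard, hSeven⟩ := key
  refine ⟨G.edges - S, Multiset.sub_le_self _ _, ?_, ?_, ?_⟩
  · rw [Multiset.card_sub hSle]
    omega
  · show (Multigraph.mk (G.edges + (G.edges - S))).toSimple.Connected
    exact SimpleGraph.Connected.mono
      (toSimple_mono (Multiset.le_add_right _ _)) hconn
  · intro v
    have hds : (G.edges - S) + S = G.edges := tsub_add_cancel_of_le hSle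
    have h1 : G.degree v = (Multigraph.mk (G.edges - S)).degree v
        + (Multigraph.mk S).degree v := by
      conv_lhs => rw [← hGmk, ← hds]
      exact degree_add _ _ v
    have h2 : (Multigraph.mk (G.edges + (G.edges - S))).degree v
        = G.degree v + (Multigraph.mk (G.edges - S)).degree v := degree_add _ _ v
    obtain ⟨k, hk⟩ := hSeven v
    exact ⟨(Multigraph.mk (G.edges - S)).degree v + k, by omega⟩
end

section
/- If G is a connected multigraph with E edges and no vertex of degree 1, then G can be made Eulerian by duplicating at most E-2 of its edges. -/
set_option linter.unusedSectionVars false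
set_option maxHeartbeats 1000000

section Aux

open SimpleGraph Finset

variable {V : Type*} [Fintype V] [DecidableEq V]

lemma exists_spanning_tree (H : SimpleGraph V) (h : H.Connected) :
    ∃ T : SimpleGraph V, T ≤ H ∧ T.IsTree := by
  classical
  obtain ⟨n, hn⟩ : ∃ n, H.edgeSet.ncard ≤ n := ⟨_, le_rfl⟩
  induction n generalizing H with
  | zero =>
    have hb : H = ⊥ := by
      rw [← SimpleGraph.edgeSet_eq_empty]
      have : H.edgeSet.Finite := Set.toFinite _
      rw [← Set.ncard_eq_zero this]
      omega
    exact ⟨H, le_rfl, h, hb ▸ SimpleGraph.isAcyclic_bot⟩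
  | succ n ih =>
    by_cases hac : H.IsAcyclic
    · exact ⟨H, le_rfl, h, hac⟩
    · rw [isAcyclic_iff_forall_adj_isBridge] at hac
      push_neg at hac
      obtain ⟨v, w, hadj, hbr⟩ := hac
      rw [isBridge_iff] at hbr
      push_neg at hbr
      have hreach : (H \ fromEdgeSet {s(v, w)}).Reachable v w := hbr
      set H' := H \ fromEdgeSet {s(v, w)} with hH'
      have hle : H' ≤ H := sdiff_le
      have hconn' : H'.Connected := by
        have hpre : H'.Preconnected := by
          intro a b
          obtain ⟨p⟩ := h.preconnected a b
          induction p with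
          | nil => exact Reachable.refl _
          | @cons a c b hac p ihp =>
            refine Reachable.trans ?_ ihp
            by_cases he : s(a, c) = s(v, w)
            · rw [Sym2.eq_iff] at he
              rcases he with ⟨rfl, rfl⟩ | ⟨rfl, rfl⟩
              · exact hreach
              · exact hreach.symm
            · exact SimpleGraph.Adj.reachable (by
                simp only [hH', sdiff_adj, fromEdgeSet_adj, Set.mem_singleton_iff]
                exact ⟨hac, fun hh => he hh.1⟩)
        have : Nonempty V := h.nonempty
        exact ⟨hpre⟩
      have hcard : H'.edgeSet.ncard ≤ n := by
        have he : H'.edgeSet = H.edgeSet \ {s(v, w)} := by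
          rw [hH', edgeSet_sdiff, edgeSet_fromEdgeSet, edgeSet_sdiff_sdiff_isDiag]
        have hmem : s(v, w) ∈ H.edgeSet := hadj
        have hfin : H.edgeSet.Finite := Set.toFinite _
        have h2 := Set.ncard_diff_singleton_lt_of_mem hmem hfin
        rw [he]
        omega
      obtain ⟨T, hT1, hT2⟩ := ih H' hconn' hcard
      exact ⟨T, hT1.trans hle, hT2⟩

lemma filter_symmDiff' (A B : Finset (Sym2 V)) (p : Sym2 V → Prop) [DecidablePred p] :
    (symmDiff A B).filter p = symmDiff (A.filter p) (B.filter p) := by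
  ext e
  simp only [Finset.mem_filter, Finset.mem_symmDiff]
  tauto

lemma card_symmDiff_parity (A B : Finset (Sym2 V)) :
    (symmDiff A B).card + 2 * (A ∩ B).card = A.card + B.card := by
  have h1 : symmDiff A B = (A \ B) ∪ (B \ A) := rfl
  have hd : Disjoint (A \ B) (B \ A) := disjoint_sdiff_sdiff
  have h2 := Finset.card_union_of_disjoint hd
  have h3 : (A \ B).card + (A ∩ B).card = A.card := Finset.card_sdiff_add_card_inter A B
  have h4 : (B \ A).card + (B ∩ A).card = B.card := Finset.card_sdiff_add_card_inter B A
  rw [Finset.inter_comm B A] at h4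
  rw [h1, h2]
  omega

lemma countP_toFinset {l : List (Sym2 V)} (hl : l.Nodup) (w : V) :
    (l.toFinset.filter (fun e => w ∈ e)).card = l.countP (fun e => w ∈ e) := by
  induction l with
  | nil => simp
  | cons a l ih =>
    rw [List.nodup_cons] at hl
    rw [List.countP_cons, List.toFinset_cons, Finset.filter_insert]
    by_cases h : w ∈ a
    · rw [if_pos h, Finset.card_insert_of_notMem (by simp [hl.1]), ih hl.2]
      simp [h]
    · rw [if_neg h, ih hl.2]
      simp [h]

lemma exists_parity_finset (T : SimpleGraph V) (hT : T.Connected) :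
    ∀ (S : Finset V), Even S.card →
    ∃ D : Finset (Sym2 V), ↑D ⊆ T.edgeSet ∧
      ∀ w, (Odd ((D.filter (fun e => w ∈ e)).card) ↔ w ∈ S) := by
  have key : ∀ (n : ℕ) (S : Finset V), S.card = n → Even S.card →
      ∃ D : Finset (Sym2 V), ↑D ⊆ T.edgeSet ∧
        ∀ w, (Odd ((D.filter (fun e => w ∈ e)).card) ↔ w ∈ S) := by
    intro n
    induction n using Nat.strong_induction_on with
    | _ n ih =>
    intro S hn hS
    rcases S.eq_empty_or_nonempty with rfl | ⟨u, hu⟩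
    · exact ⟨∅, by simp, by simp⟩
    · have h2 : 2 ≤ S.card := by
        rcases hS with ⟨k, hk⟩
        have : 0 < S.card := Finset.card_pos.mpr ⟨u, hu⟩
        omega
      obtain ⟨v, hv⟩ : (S.erase u).Nonempty := by
        rw [← Finset.card_pos, Finset.card_erase_of_mem hu]; omega
      have hvu : v ≠ u := Finset.ne_of_mem_erase hv
      have hvS : v ∈ S := Finset.mem_of_mem_erase hv
      obtain ⟨wlk⟩ := hT.preconnected u v
      set p := wlk.toPath with hp
      have hnd : p.1.edges.Nodup := p.2.isTrail.edges_nodup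
      set P : Finset (Sym2 V) := p.1.edges.toFinset with hP
      have hPsub : ↑P ⊆ T.edgeSet := by
        intro e he
        simp only [hP, List.coe_toFinset, Set.mem_setOf_eq] at he
        exact p.1.edges_subset_edgeSet he
      have hPflip : ∀ w, Odd ((P.filter (fun e => w ∈ e)).card) ↔ (w = u ∨ w = v) := by
        intro w
        rw [hP, countP_toFinset hnd]
        have h3 := p.2.isTrail.even_countP_edges_iff (p := p.1) w
        rw [← Nat.not_even_iff_odd]
        constructor
        · intro h
          by_contra hc
          push_neg at hc
          exact h (h3.mpr (fun _ => hc))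
        · intro h hcon
          have := (h3.mp hcon) hvu.symm
          tauto
      set S' := (S.erase u).erase v with hS'
      have hc' : S'.card = S.card - 2 := by
        rw [hS', Finset.card_erase_of_mem hv, Finset.card_erase_of_mem hu]
        omega
      have hev' : Even S'.card := by
        rcases hS with ⟨k, hk⟩
        rw [hc']
        exact ⟨k - 1, by omega⟩
      obtain ⟨D', hD'sub, hD'flip⟩ := ih S'.card (by omega) S' rfl hev'
      refine ⟨symmDiff D' P, ?_, ?_⟩
      · intro e he
        rw [Finset.coe_symmDiff] at he
        rcases he with ⟨h1, _⟩ | ⟨h1, _⟩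
        · exact hD'sub h1
        · exact hPsub h1
      · intro w
        have keyc := card_symmDiff_parity (D'.filter (fun e => w ∈ e)) (P.filter (fun e => w ∈ e))
        rw [← filter_symmDiff'] at keyc
        have hD' := hD'flip w
        have hPf := hPflip w
        have hmem : w ∈ S' ↔ (w ∈ S ∧ w ≠ u ∧ w ≠ v) := by
          simp only [hS', Finset.mem_erase]
          tauto
        rw [Nat.odd_iff] at hD' hPf ⊢
        by_cases h1 : w = u <;> by_cases h2 : w = v
        · exact absurd (h1.symm.trans h2) hvu.symm
        · have hwS : w ∈ S := h1 ▸ hu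
          have hnS' : w ∉ S' := fun hh => (hmem.mp hh).2.1 h1
          have ha : ¬ (#(filter (fun e => w ∈ e) D') % 2 = 1) := fun h => hnS' (hD'.mp h)
          have hb : #(filter (fun e => w ∈ e) P) % 2 = 1 := hPf.mpr (Or.inl h1)
          refine iff_of_true ?_ hwS
          omega
        · have hwS : w ∈ S := h2 ▸ hvS
          have hnS' : w ∉ S' := fun hh => (hmem.mp hh).2.2 h2
          have ha : ¬ (#(filter (fun e => w ∈ e) D') % 2 = 1) := fun h => hnS' (hD'.mp h)
          have hb : #(filter (fun e => w ∈ e) P) % 2 = 1 := hPf.mpr (Or.inr h2)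
          refine iff_of_true ?_ hwS
          omega
        · have hb : ¬ (#(filter (fun e => w ∈ e) P) % 2 = 1) := fun h => (hPf.mp h).elim h1 h2
          by_cases hws : w ∈ S
          · have ha : #(filter (fun e => w ∈ e) D') % 2 = 1 := hD'.mpr (hmem.mpr ⟨hws, h1, h2⟩)
            refine iff_of_true ?_ hws
            omega
          · have ha : ¬ (#(filter (fun e => w ∈ e) D') % 2 = 1) :=
              fun h => hws (hmem.mp (hD'.mp h)).1
            refine iff_of_false ?_ hws
            omega
  intro S hS
  exact key S.card S rfl hS

lemma sum_edge_contrib (e : Sym2 V) :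
    (∑ v : V, if e = s(v, v) then 2 else if v ∈ e then 1 else 0) = 2 := by
  induction e using Sym2.inductionOn with
  | hf a b =>
    by_cases hab : a = b
    · subst hab
      have hpt : ∀ v : V,
          (if s(a, a) = s(v, v) then 2 else if v ∈ s(a, a) then 1 else 0)
            = if v = a then 2 else 0 := by
        intro v
        by_cases hv : v = a
        · subst hv; simp
        · have h1 : ¬ (s(a, a) = s(v, v)) := by
            rw [Sym2.eq_iff]
            intro h
            rcases h with ⟨h, _⟩ | ⟨h, _⟩ <;> exact hv h.symm
          have h2 : v ∉ s(a, a) := by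
            rw [Sym2.mem_iff]
            intro h
            rcases h with h | h <;> exact hv h
          rw [if_neg h1, if_neg h2, if_neg hv]
      simp only [hpt]
      simp
    · have hpt : ∀ v : V,
          (if s(a, b) = s(v, v) then 2 else if v ∈ s(a, b) then 1 else 0)
            = (if v = a then 1 else 0) + (if v = b then 1 else 0) := by
        intro v
        have h1 : ¬ (s(a, b) = s(v, v)) := by
          rw [Sym2.eq_iff]
          intro h
          rcases h with ⟨ha, hb⟩ | ⟨ha, hb⟩ <;> exact hab (ha.trans hb.symm)
        rw [if_neg h1]
        by_cases h2 : v = a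
        · subst h2
          rw [if_pos (by simp), if_pos rfl, if_neg hab]
        · by_cases h3 : v = b
          · subst h3
            rw [if_pos (by simp), if_neg h2, if_pos rfl]
          · rw [if_neg, if_neg h2, if_neg h3]
            rw [Sym2.mem_iff]
            intro h
            rcases h with h | h
            · exact h2 h
            · exact h3 h
      simp only [hpt]
      rw [Finset.sum_add_distrib]
      simp [hab]

lemma degsum_aux (m : Multiset (Sym2 V)) :
    ∑ v : V, (m.map (fun e => if e = s(v, v) then 2 else if v ∈ e then 1 else 0)).sum
      = 2 * Multiset.card m := by
  induction m using Multiset.induction_on with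
  | empty => simp
  | cons e m ih =>
    simp only [Multiset.map_cons, Multiset.sum_cons, Multiset.card_cons,
      Finset.sum_add_distrib, ih, sum_edge_contrib]
    ring

lemma degree_sum (G : Multigraph V) :
    ∑ v : V, G.degree v = 2 * Multiset.card G.edges :=
  degsum_aux G.edges

lemma even_card_odd (G : Multigraph V) :
    Even (Finset.univ.filter (fun v => Odd (G.degree v))).card := by
  have h := degree_sum G
  have h2 : (∑ v : V, G.degree v) % 2 = 0 := by omega
  rw [Finset.sum_nat_mod] at h2
  have h3 : (∑ v : V, G.degree v % 2)
      = (Finset.univ.filter (fun v => Odd (G.degree v))).card := by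
    rw [Finset.card_filter]
    apply Finset.sum_congr rfl
    intro v _
    by_cases hv : Odd (G.degree v)
    · rw [if_pos hv, Nat.odd_iff.mp hv]
    · rw [if_neg hv]
      rw [Nat.odd_iff] at hv
      omega
  rw [h3] at h2
  exact Nat.even_iff.mpr (by omega)


end Aux

/-- If a connected multigraph with `E` edges has no vertex of degree 1,
then it can be made Eulerian by duplicating at most `E - 2` of its edges. -/
theorem stmt_2 {V : Type*} [Fintype V] [DecidableEq V]
    (G : Multigraph V) (hconn : G.Connected)
    (hdeg : ∀ v : V, G.degree v ≠ 1) :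
    ∃ D : Multiset (Sym2 V), D ≤ G.edges ∧
      Multiset.card D ≤ Multiset.card G.edges - 2 ∧
      (Multigraph.mk (G.edges + D)).Eulerian := by
  classical
  set T : Finset V := Finset.univ.filter (fun v => Odd (G.degree v)) with hT
  have hvT : ∀ v, v ∈ T ↔ Odd (G.degree v) := by
    intro v; simp [hT]
  rcases eq_or_ne T ∅ with hTe | hTe
  · refine ⟨0, zero_le, by simp, ?_⟩
    rw [add_zero]
    constructor
    · exact hconn
    · intro v
      rw [← Nat.not_odd_iff_even]
      intro hodd
      have : v ∈ T := (hvT v).mpr hodd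
      simp [hTe] at this
  · have hne : T.Nonempty := Finset.nonempty_iff_ne_empty.mpr hTe
    obtain ⟨u, huT⟩ := hne
    obtain ⟨Tr, hTrle, hTree⟩ := exists_spanning_tree G.toSimple hconn
    obtain ⟨D, hDsub, hDflip⟩ :=
      exists_parity_finset Tr hTree.isConnected T (even_card_odd G)
    have hmemE : ∀ e, e ∈ G.toSimple.edgeSet → e ∈ G.edges := by
      intro e
      induction e using Sym2.inductionOn with
      | hf a b =>
        intro h1
        rw [SimpleGraph.mem_edgeSet] at h1
        exact h1.2
    have hDedge : ∀ e ∈ D, e ∈ G.edges := by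
      intro e he
      exact hmemE e (SimpleGraph.edgeSet_mono hTrle (hDsub he))
    refine ⟨D.val, ?_, ?_, ?_, ?_⟩
    · rw [Multiset.le_iff_count]
      intro e
      by_cases he : e ∈ D
      · rw [Multiset.count_eq_one_of_mem D.nodup he]
        exact Multiset.one_le_count_iff_mem.mpr (hDedge e he)
      · rw [Multiset.count_eq_zero_of_notMem he]
        exact Nat.zero_le _
    · -- cardinality bound
      have hDTr : D ⊆ Tr.edgeFinset := by
        intro e he
        rw [SimpleGraph.mem_edgeFinset]
        exact hDsub he
      have hDcard : D.card ≤ Fintype.card V - 1 := by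
        have h1 := Finset.card_le_card hDTr
        have h2 := hTree.card_edgeFinset
        omega
      have hud : Odd (G.degree u) := (hvT u).mp huT
      have hu3 : 3 ≤ G.degree u := by
        rcases hud with ⟨k, hk⟩
        have := hdeg u
        omega
      have hv2 : ∀ v : V, v ≠ u → 2 ≤ G.degree v := by
        intro v hvu
        obtain ⟨p⟩ := hconn.preconnected v u
        cases p with
        | nil => exact absurd rfl hvu
        | @cons _ c _ hadj q =>
          have hme : s(v, c) ∈ G.edges := hadj.2
          have h1 : (1 : ℕ) ∈ G.edges.map
              (fun e => if e = s(v, v) then 2 else if v ∈ e then 1 else 0) := by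
            refine Multiset.mem_map.mpr ⟨s(v, c), hme, ?_⟩
            rw [if_neg, if_pos (by simp)]
            intro h
            rw [Sym2.eq_iff] at h
            exact hadj.1 (by tauto)
          have h2 := Multiset.single_le_sum (fun x _ => Nat.zero_le x) 1 h1
          have h3 := hdeg v
          unfold Multigraph.degree at h3 ⊢
          omega
      have hsum : 2 * Fintype.card V + 1 ≤ ∑ v : V, G.degree v := by
        have hle : ∑ v : V, (if v = u then 3 else 2) ≤ ∑ v : V, G.degree v := by
          apply Finset.sum_le_sum
          intro v _
          by_cases h : v = u
          · subst h; simpa using hu3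
          · simpa [h] using hv2 v h
        have heq : (∑ v : V, (if v = u then 3 else 2)) = 2 * Fintype.card V + 1 := by
          rw [Finset.sum_congr rfl
            (g := fun v => 2 + (if v = u then 1 else 0))
            (by intro v _; by_cases h : v = u <;> simp [h])]
          rw [Finset.sum_add_distrib, Finset.sum_const, Finset.sum_ite_eq' Finset.univ u]
          simp [Finset.card_univ, mul_comm]
        omega
      have hds := degree_sum G
      have hcardval : Multiset.card D.val = D.card := rfl
      omega
    · -- connected
      have hle : G.toSimple ≤ (Multigraph.mk (G.edges + D.val)).toSimple := by
        intro a b hab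
        exact ⟨hab.1, Multiset.mem_add.mpr (Or.inl hab.2)⟩
      exact SimpleGraph.Connected.mono hle hconn
    · -- even degrees
      intro v
      have hnd : ∀ e ∈ D.val, ¬ e.IsDiag := by
        intro e he
        exact SimpleGraph.not_isDiag_of_mem_edgeSet Tr (hDsub he)
      have hmap : D.val.map (fun e => if e = s(v, v) then 2 else if v ∈ e then 1 else 0)
          = D.val.map (fun e => if v ∈ e then 1 else 0) := by
        apply Multiset.map_congr rfl
        intro e he
        rw [if_neg]
        intro h
        exact hnd e he (h ▸ (Sym2.mk_isDiag_iff.mpr rfl))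
      have hdadd : (Multigraph.mk (G.edges + D.val)).degree v
          = G.degree v + (D.filter (fun e => v ∈ e)).card := by
        show ((G.edges + D.val).map _).sum = _
        rw [Multiset.map_add, Multiset.sum_add, hmap, Finset.card_filter]
        rfl
      rw [hdadd]
      have hflip := hDflip v
      rw [hvT v] at hflip
      rw [Nat.even_iff]
      rw [Nat.odd_iff, Nat.odd_iff] at hflip
      by_cases h : G.degree v % 2 = 1
      · have := hflip.mpr h
        omega
      · have : ¬ ((D.filter (fun e => v ∈ e)).card % 2 = 1) := fun hh => h (hflip.mp hh)
        omega
end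

section
/- In any tree T, the number of vertices of odd degree is even, and the odd-degree vertices can be paired so that the paths in T connecting each pair are pairwise edge-disjoint. -/
/-!
Pair the odd-degree vertices so that the total tree distance between partners is minimal.
If the paths of two pairs `(a, b)` and `(c, d)` shared an edge `xy`, say with `a, c` on the
`x`-side, then `d(a, c) + d(b, d) ≤ d(a, x) + d(x, c) + d(b, y) + d(y, d)`, which is
`d(a, b) + d(c, d) - 2`: re-pairing them as `(a, c), (b, d)` would lower the total.
-/

section Matching

variable {α : Type*}

def endpoints (m : Multiset (α × α)) : Multiset α :=
  m.map Prod.fst + m.map Prod.snd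

def matchingCost (f : α → α → ℕ) (m : Multiset (α × α)) : ℕ :=
  (m.map fun p => f p.1 p.2).sum

@[simp]
lemma endpoints_cons (p : α × α) (m : Multiset (α × α)) :
    endpoints (p ::ₘ m) = p.1 ::ₘ p.2 ::ₘ endpoints m := by
  rw [endpoints, endpoints, Multiset.map_cons, Multiset.map_cons, Multiset.cons_add,
    Multiset.add_cons]

@[simp]
lemma matchingCost_cons (f : α → α → ℕ) (p : α × α) (m : Multiset (α × α)) :
    matchingCost f (p ::ₘ m) = f p.1 p.2 + matchingCost f m := by
  simp [matchingCost]

lemma Multiset.Nodup.of_endpoints {m : Multiset (α × α)} (h : (endpoints m).Nodup) :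
    m.Nodup :=
  (Multiset.nodup_add.mp h).1.of_map _

lemma Multiset.Nodup.fst_ne_snd_of_endpoints {m : Multiset (α × α)} (h : (endpoints m).Nodup)
    {p : α × α} (hp : p ∈ m) : p.1 ≠ p.2 := by
  obtain ⟨r, rfl⟩ := Multiset.exists_cons_of_mem hp
  rw [endpoints_cons] at h
  exact fun heq => (Multiset.nodup_cons.mp h).1 (heq ▸ Multiset.mem_cons_self _ _)

lemma exists_endpoints_eq_coe :
    ∀ l : List α, Even l.length → ∃ m, endpoints m = (l : Multiset α)
  | [], _ => ⟨0, rfl⟩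
  | [_], h => absurd h (by simp)
  | a :: b :: l, h => by
    obtain ⟨m, hm⟩ := exists_endpoints_eq_coe l (by simpa [Nat.even_add_one] using h)
    exact ⟨(a, b) ::ₘ m, by simp [hm]⟩

lemma exists_matchingCost_min (f : α → α → ℕ) (t : Multiset α)
    (ht : Even (Multiset.card t)) :
    ∃ m, endpoints m = t ∧
      ∀ m', endpoints m' = t → matchingCost f m ≤ matchingCost f m' := by
  obtain ⟨m₀, hm₀⟩ : ∃ m, endpoints m = t := by
    induction t using Quotient.inductionOn with
    | h l => exact exists_endpoints_eq_coe l ht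
  obtain ⟨m, hm, hmin⟩ :=
    (measure (matchingCost f)).wf.has_min {m | endpoints m = t} ⟨m₀, hm₀⟩
  exact ⟨m, hm, fun m' hm' => not_lt.mp (hmin m' hm')⟩

lemma add_le_add_of_forall_matchingCost_le {f : α → α → ℕ} {m : Multiset (α × α)}
    (hmin : ∀ m', endpoints m' = endpoints m → matchingCost f m ≤ matchingCost f m')
    {a b c d : α} (hab : (a, b) ∈ m) (hcd : (c, d) ∈ m) (hne : (a, b) ≠ (c, d)) :
    f a b + f c d ≤ f a c + f b d ∧ f a b + f c d ≤ f a d + f b c := by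
  obtain ⟨r, rfl⟩ := Multiset.exists_cons_of_mem hab
  obtain ⟨r, rfl⟩ :=
    Multiset.exists_cons_of_mem ((Multiset.mem_cons.mp hcd).resolve_left hne.symm)
  constructor
  · have := hmin ((a, c) ::ₘ (b, d) ::ₘ r) (by simp [Multiset.cons_swap])
    simp only [matchingCost_cons] at this
    omega
  · have := hmin ((a, d) ::ₘ (b, c) ::ₘ r) (by simp [Multiset.cons_swap])
    simp only [matchingCost_cons] at this
    omega

end Matching

namespace SimpleGraph

variable {V : Type*} {G : SimpleGraph V} {a b c d : V}

lemma IsAcyclic.length_eq_dist_of_isPath (hG : G.IsAcyclic) {w : G.Walk a b} (hw : w.IsPath) :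
    w.length = G.dist a b := by
  obtain ⟨p, hp, hlen⟩ := w.reachable.exists_path_of_dist
  have hwp : (⟨w, hw⟩ : G.Path a b) = ⟨p, hp⟩ := (hG.subsingleton_path a b).elim _ _
  rw [← hlen, show w = p from congrArg Subtype.val hwp]

lemma Walk.dist_eq_of_isSubwalk_toWalk {x y : V} {w : G.Walk a b}
    (hw : w.length = G.dist a b) (hxy : G.Adj x y) (hsub : hxy.toWalk.IsSubwalk w) :
    G.dist a b = G.dist a x + 1 + G.dist y b := by
  obtain ⟨p, q, rfl⟩ := hsub
  have hp : G.dist a x ≤ p.length := dist_le p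
  have hq : G.dist y b ≤ q.length := dist_le q
  have hax : G.dist a b ≤ G.dist a x + G.dist x b := p.reachable.dist_triangle_left b
  have hyb : G.dist x b ≤ G.dist x y + G.dist y b := q.reachable.dist_triangle_right x
  have hxy1 : G.dist x y = 1 := dist_eq_one_iff_adj.mpr hxy
  simp only [Walk.length_append, Adj.length_toWalk] at hw
  omega

lemma Walk.dist_eq_of_mk_mem_edges {x y : V} {w : G.Walk a b}
    (hw : w.length = G.dist a b) (he : s(x, y) ∈ w.edges) :
    G.dist a b = G.dist a x + 1 + G.dist y b ∨ G.dist a b = G.dist a y + 1 + G.dist x b := by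
  have hxy := w.adj_of_mem_edges he
  exact ((isSubwalk_toWalk_iff_mem_edges hxy).mpr he).imp
    (dist_eq_of_isSubwalk_toWalk hw hxy) (dist_eq_of_isSubwalk_toWalk hw hxy.symm)

lemma Connected.dist_add_dist_lt_of_mem_edges (hG : G.Connected) {w : G.Walk a b}
    {w' : G.Walk c d} (hw : w.length = G.dist a b) (hw' : w'.length = G.dist c d) {e : Sym2 V}
    (he : e ∈ w.edges) (he' : e ∈ w'.edges) :
    G.dist a c + G.dist b d < G.dist a b + G.dist c d ∨
      G.dist a d + G.dist b c < G.dist a b + G.dist c d := by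
  induction e using Sym2.ind with | h x y => ?_
  have tri : ∀ u v z, G.dist u v ≤ G.dist u z + G.dist v z := fun u v z =>
    (hG.dist_triangle (v := z)).trans_eq (by rw [dist_comm (u := z)])
  have := tri a c x; have := tri a c y; have := tri b d x; have := tri b d y
  have := tri a d x; have := tri a d y; have := tri b c x; have := tri b c y
  have := dist_comm (G := G) (u := y) (v := b); have := dist_comm (G := G) (u := x) (v := b)
  have := dist_comm (G := G) (u := y) (v := d); have := dist_comm (G := G) (u := x) (v := d)
  rcases w.dist_eq_of_mk_mem_edges hw he with h | h <;>
    rcases w'.dist_eq_of_mk_mem_edges hw' he' with h' | h' <;> omega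

end SimpleGraph

theorem stmt_3_general {V : Type*} [Fintype V]
    (T : SimpleGraph V) [DecidableRel T.Adj] (hT : T.IsTree) :
    Even (Finset.univ.filter (fun v => Odd (T.degree v))).card ∧
    ∃ M : Finset (V × V),
      (∀ p ∈ M, p.1 ≠ p.2) ∧
      (M.val.map Prod.fst + M.val.map Prod.snd =
        (Finset.univ.filter (fun v => Odd (T.degree v))).val) ∧
      (∀ p ∈ M, ∀ q ∈ M, p ≠ q →
        ∀ (w : T.Walk p.1 p.2) (w' : T.Walk q.1 q.2),
          w.IsPath → w'.IsPath → ∀ e, e ∈ w.edges → e ∉ w'.edges) := by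
  have heven := T.even_card_odd_degree_vertices
  obtain ⟨m, hm, hmin⟩ := exists_matchingCost_min T.dist _ heven
  have hnd : (endpoints m).Nodup := hm ▸ Finset.nodup _
  refine ⟨heven, ⟨m, hnd.of_endpoints⟩, fun p hp => hnd.fst_ne_snd_of_endpoints hp, hm, ?_⟩
  rintro ⟨a, b⟩ hab ⟨c, d⟩ hcd hne w w' hw hw' e he he'
  have hopt := add_le_add_of_forall_matchingCost_le (fun m' h => hmin m' (h.trans hm)) hab hcd hne
  rcases hT.connected.dist_add_dist_lt_of_mem_edges (hT.isAcyclic.length_eq_dist_of_isPath hw)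
    (hT.isAcyclic.length_eq_dist_of_isPath hw') he he' with h | h <;> dsimp only at h <;> omega

/-- In any finite tree `T`, the number of odd-degree vertices is even, and the
odd-degree vertices can be paired up so that the (unique) paths in `T`
connecting the two vertices of each pair are pairwise edge-disjoint. -/
theorem stmt_3 {V : Type*} [Fintype V] [DecidableEq V]
    (T : SimpleGraph V) [DecidableRel T.Adj] (hT : T.IsTree) :
    Even (Finset.univ.filter (fun v => Odd (T.degree v))).card ∧
    ∃ M : Finset (V × V),
      (∀ p ∈ M, p.1 ≠ p.2) ∧
      (M.val.map Prod.fst + M.val.map Prod.snd =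
        (Finset.univ.filter (fun v => Odd (T.degree v))).val) ∧
      (∀ p ∈ M, ∀ q ∈ M, p ≠ q →
        ∀ (w : T.Walk p.1 p.2) (w' : T.Walk q.1 q.2),
          w.IsPath → w'.IsPath → ∀ e, e ∈ w.edges → e ∉ w'.edges) :=
  stmt_3_general T hT
end

section
/- If a pairing of the odd-degree vertices of a tree T minimizes the total length of the connecting paths, then those paths are pairwise edge-disjoint. -/
open Finset

/-- A pairing of the odd-degree vertices of a graph: a finite set of ordered
pairs of distinct vertices whose entries enumerate exactly the odd-degree
vertices (each appearing once). -/
def IsOddPairing {V : Type*} [Fintype V] [DecidableEq V]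
    (T : SimpleGraph V) [DecidableRel T.Adj] (M : Finset (V × V)) : Prop :=
  (∀ p ∈ M, p.1 ≠ p.2) ∧
    (M.val.map Prod.fst + M.val.map Prod.snd =
      (Finset.univ.filter (fun v => Odd (T.degree v))).val)

open SimpleGraph in
/-- In a tree, any path between two vertices has length equal to the distance. -/
lemma tree_path_length {V : Type*} {T : SimpleGraph V} (hT : T.IsTree) {a b : V}
    {w : T.Walk a b} (hw : w.IsPath) : w.length = T.dist a b := by
  obtain ⟨p, hp, hl⟩ := Reachable.exists_path_of_dist ⟨w⟩
  have h : (⟨w, hw⟩ : T.Path a b) = ⟨p, hp⟩ := hT.IsAcyclic.path_unique _ _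
  rw [← hl]
  exact congrArg Walk.length (congrArg Subtype.val h)

/-- In a tree, a dart on a path splits the distance. -/
lemma tree_dart_split {V : Type*} [DecidableEq V] {T : SimpleGraph V} (hT : T.IsTree) {a b : V}
    (w : T.Walk a b) (hw : w.IsPath) (d : T.Dart) (hd : d ∈ w.darts) :
    T.dist a d.fst + 1 + T.dist d.snd b = T.dist a b := by
  induction w with
  | nil => simp at hd
  | @cons u v b h w ih =>
    rw [SimpleGraph.Walk.darts_cons, List.mem_cons] at hd
    rw [SimpleGraph.Walk.cons_isPath_iff] at hw
    rcases hd with rfl | hd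
    · have h1 : (SimpleGraph.Walk.cons h w).length = T.dist u b :=
        tree_path_length hT ((SimpleGraph.Walk.cons_isPath_iff h w).2 hw)
      have h2 : w.length = T.dist v b := tree_path_length hT hw.1
      simp only [SimpleGraph.Walk.length_cons] at h1
      show T.dist u u + 1 + T.dist v b = T.dist u b
      rw [SimpleGraph.dist_self]
      omega
    · have ih' := ih hw.1 hd
      have hs : d.fst ∈ w.support := SimpleGraph.Walk.dart_fst_mem_support_of_mem_darts w hd
      have h1 : (SimpleGraph.Walk.cons h w).length = T.dist u b :=
        tree_path_length hT ((SimpleGraph.Walk.cons_isPath_iff h w).2 hw)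
      have h2 : w.length = T.dist v b := tree_path_length hT hw.1
      simp only [SimpleGraph.Walk.length_cons] at h1
      have ht : (w.takeUntil d.fst hs).IsPath := hw.1.takeUntil hs
      have hcons : (SimpleGraph.Walk.cons h (w.takeUntil d.fst hs)).IsPath :=
        ht.cons (fun hmem => hw.2 (SimpleGraph.Walk.support_takeUntil_subset w hs hmem))
      have h3 : (SimpleGraph.Walk.cons h (w.takeUntil d.fst hs)).length = T.dist u d.fst :=
        tree_path_length hT hcons
      have h4 : (w.takeUntil d.fst hs).length = T.dist v d.fst := tree_path_length hT ht
      simp only [SimpleGraph.Walk.length_cons] at h3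
      omega

/-- Replacing two pairs of a minimal odd pairing by a re-matching of the same
four vertices cannot decrease the total length. -/
lemma pairing_exchange {V : Type*} [Fintype V] [DecidableEq V]
    (T : SimpleGraph V) [DecidableRel T.Adj]
    (M : Finset (V × V)) (hM : IsOddPairing T M)
    (hmin : ∀ M' : Finset (V × V), IsOddPairing T M' →
      ∑ p ∈ M, T.dist p.1 p.2 ≤ ∑ p ∈ M', T.dist p.1 p.2)
    (p q : V × V) (hp : p ∈ M) (hq : q ∈ M) (hpq : p ≠ q)
    (r s : V × V)
    (h4 : ({r.1, r.2, s.1, s.2} : Multiset V) = {p.1, p.2, q.1, q.2}) :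
    T.dist p.1 p.2 + T.dist q.1 q.2 ≤ T.dist r.1 r.2 + T.dist s.1 s.2 := by
  classical
  set M₀ : Finset (V × V) := (M.erase p).erase q with hM₀
  have hqp : q ∈ M.erase p := Finset.mem_erase.2 ⟨fun h => hpq h.symm, hq⟩
  have hval : M.val = p ::ₘ q ::ₘ M₀.val := by
    have h1 : q ::ₘ M₀.val = (M.erase p).val := by
      rw [hM₀, Finset.erase_val (M.erase p)]
      exact Multiset.cons_erase (by exact hqp)
    rw [h1, Finset.erase_val]
    exact (Multiset.cons_erase (by exact hp)).symm
  set F₀ : Multiset V := M₀.val.map Prod.fst with hF₀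
  set G₀ : Multiset V := M₀.val.map Prod.snd with hG₀
  have hsum := hM.2
  rw [hval] at hsum
  simp only [Multiset.map_cons] at hsum
  have rearr : ∀ (x y z t : V) (F G : Multiset V),
      (x ::ₘ y ::ₘ F) + (z ::ₘ t ::ₘ G) = ({x, z, y, t} : Multiset V) + (F + G) := by
    intro x y z t F G
    simp only [Multiset.insert_eq_cons, ← Multiset.singleton_add]
    abel
  have hnd : ((p.1 ::ₘ q.1 ::ₘ F₀) + (p.2 ::ₘ q.2 ::ₘ G₀)).Nodup := by
    rw [hsum]; exact (Finset.univ.filter (fun v => Odd (T.degree v))).nodup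
  rw [rearr] at hnd
  simp only [Multiset.insert_eq_cons, Multiset.nodup_cons, Multiset.mem_cons,
    Multiset.mem_add, Multiset.mem_singleton, not_or, Multiset.singleton_add,
    Multiset.cons_add] at hnd
  obtain ⟨⟨hab, hac, had, haF, haG⟩, ⟨hbc, hbd, hbF, hbG⟩, ⟨hcd, hcF, hcG⟩,
    ⟨hdF, hdG⟩, -⟩ := hnd
  have nodup4 : ({p.1, p.2, q.1, q.2} : Multiset V).Nodup := by
    simp [Multiset.insert_eq_cons, Multiset.nodup_cons, hab, hac, had, hbc, hbd, hcd]
  have rnd : ({r.1, r.2, s.1, s.2} : Multiset V).Nodup := by rw [h4]; exact nodup4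
  simp only [Multiset.insert_eq_cons, Multiset.nodup_cons, Multiset.mem_cons,
    Multiset.mem_singleton, not_or, Multiset.nodup_singleton, and_true] at rnd
  obtain ⟨⟨hr12, hr1s1, hr1s2⟩, ⟨hr2s1, hr2s2⟩, hs12⟩ := rnd
  have hmem : ∀ x ∈ ({r.1, r.2, s.1, s.2} : Multiset V), x ∉ F₀ ∧ x ∉ G₀ := by
    intro x hx
    rw [h4] at hx
    simp only [Multiset.insert_eq_cons, Multiset.mem_cons, Multiset.mem_singleton] at hx
    rcases hx with rfl | rfl | rfl | rfl
    · exact ⟨haF, haG⟩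
    · exact ⟨hbF, hbG⟩
    · exact ⟨hcF, hcG⟩
    · exact ⟨hdF, hdG⟩
  have hrM₀ : r ∉ M₀ := fun h =>
    (hmem r.1 (by simp)).1 (Multiset.mem_map_of_mem Prod.fst (Finset.mem_def.1 h))
  have hsM₀ : s ∉ M₀ := fun h =>
    (hmem s.1 (by simp)).1 (Multiset.mem_map_of_mem Prod.fst (Finset.mem_def.1 h))
  have hrs : r ≠ s := fun h => hr1s1 (by rw [h])
  have hrins : r ∉ insert s M₀ := by simp [Finset.mem_insert, hrs, hrM₀]
  set M' : Finset (V × V) := insert r (insert s M₀) with hM'def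
  have hval' : M'.val = r ::ₘ s ::ₘ M₀.val := by
    rw [hM'def, Finset.insert_val_of_notMem hrins, Finset.insert_val_of_notMem hsM₀]
  have hM' : IsOddPairing T M' := by
    constructor
    · intro z hz
      rcases Finset.mem_insert.1 hz with rfl | hz
      · exact hr12
      rcases Finset.mem_insert.1 hz with rfl | hz
      · exact hs12
      · exact hM.1 z (Finset.mem_of_mem_erase (Finset.mem_of_mem_erase hz))
    · rw [hval']
      simp only [Multiset.map_cons]
      rw [← hsum, rearr, rearr, h4]
  have hins : insert q M₀ = M.erase p := Finset.insert_erase hqp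
  have hpnot : p ∉ insert q M₀ := by rw [hins]; exact Finset.notMem_erase p M
  have hMeq : M = insert p (insert q M₀) := by rw [hins, Finset.insert_erase hp]
  have hqnot : q ∉ M₀ := Finset.notMem_erase q (M.erase p)
  have hsumM : ∑ z ∈ M, T.dist z.1 z.2 =
      T.dist p.1 p.2 + (T.dist q.1 q.2 + ∑ z ∈ M₀, T.dist z.1 z.2) := by
    conv_lhs => rw [hMeq]
    rw [Finset.sum_insert hpnot, Finset.sum_insert hqnot]
  have hsumM' : ∑ z ∈ M', T.dist z.1 z.2 =
      T.dist r.1 r.2 + (T.dist s.1 s.2 + ∑ z ∈ M₀, T.dist z.1 z.2) := by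
    rw [hM'def, Finset.sum_insert hrins, Finset.sum_insert hsM₀]
  have hle := hmin M' hM'
  rw [hsumM, hsumM'] at hle
  omega

/-- If a pairing of the odd-degree vertices of a finite tree `T` minimizes the
total length of the connecting paths (path lengths being measured by the graph
distance in `T`), then the connecting paths are pairwise edge-disjoint. -/
theorem stmt_4 {V : Type*} [Fintype V] [DecidableEq V]
    (T : SimpleGraph V) [DecidableRel T.Adj] (hT : T.IsTree)
    (M : Finset (V × V)) (hM : IsOddPairing T M)
    (hmin : ∀ M' : Finset (V × V), IsOddPairing T M' →
      ∑ p ∈ M, T.dist p.1 p.2 ≤ ∑ p ∈ M', T.dist p.1 p.2) :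
    ∀ p ∈ M, ∀ q ∈ M, p ≠ q →
      ∀ (w : T.Walk p.1 p.2) (w' : T.Walk q.1 q.2),
        w.IsPath → w'.IsPath → ∀ e, e ∈ w.edges → e ∉ w'.edges := by
  intro p hp q hq hpq w w' hw hw' e he he'
  simp only [SimpleGraph.Walk.edges, List.mem_map] at he he'
  obtain ⟨d1, hd1, hd1e⟩ := he
  obtain ⟨d2, hd2, hd2e⟩ := he'
  have hed : d1.edge = d2.edge := hd1e.trans hd2e.symm
  rw [SimpleGraph.dart_edge_eq_iff] at hed
  have hc := hT.isConnected
  rcases hed with rfl | rfl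
  · have h1 := tree_dart_split hT w hw d1 hd1
    have h2 := tree_dart_split hT w' hw' d1 hd2
    have hx : T.dist p.1 p.2 + T.dist q.1 q.2 ≤ T.dist p.1 q.1 + T.dist p.2 q.2 :=
      pairing_exchange T M hM hmin p q hp hq hpq (p.1, q.1) (p.2, q.2) (by
        simp only [Multiset.insert_eq_cons]
        rw [Multiset.cons_swap q.1 p.2])
    have t1 : T.dist p.1 q.1 ≤ T.dist p.1 d1.fst + T.dist d1.fst q.1 := hc.dist_triangle
    have t2 : T.dist p.2 q.2 ≤ T.dist p.2 d1.snd + T.dist d1.snd q.2 := hc.dist_triangle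
    have c1 : T.dist d1.fst q.1 = T.dist q.1 d1.fst := SimpleGraph.dist_comm
    have c2 : T.dist p.2 d1.snd = T.dist d1.snd p.2 := SimpleGraph.dist_comm
    omega
  · have h1 : T.dist p.1 d2.snd + 1 + T.dist d2.fst p.2 = T.dist p.1 p.2 :=
      tree_dart_split hT w hw d2.symm hd1
    have h2 := tree_dart_split hT w' hw' d2 hd2
    have hx : T.dist p.1 p.2 + T.dist q.1 q.2 ≤ T.dist p.1 q.2 + T.dist p.2 q.1 :=
      pairing_exchange T M hM hmin p q hp hq hpq (p.1, q.2) (p.2, q.1) (by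
        simp only [Multiset.insert_eq_cons, ← Multiset.cons_zero]
        rw [Multiset.cons_swap q.2 p.2, Multiset.cons_swap q.2 q.1])
    have t1 : T.dist p.1 q.2 ≤ T.dist p.1 d2.snd + T.dist d2.snd q.2 := hc.dist_triangle
    have t2 : T.dist p.2 q.1 ≤ T.dist p.2 d2.fst + T.dist d2.fst q.1 := hc.dist_triangle
    have c1 : T.dist p.2 d2.fst = T.dist d2.fst p.2 := SimpleGraph.dist_comm
    have c2 : T.dist d2.fst q.1 = T.dist q.1 d2.fst := SimpleGraph.dist_comm
    omega
end

section
/- If G is a connected graph with an even number of edges, then the line graph of G has a perfect matching; equivalently, the edge set of G can be partitioned into paths of length 2 (pairs of adjacent edges). -/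
open Finset


lemma biUnion_union_eq {α β : Type*} [DecidableEq α] [DecidableEq β]
    (s t : Finset α) (f : α → Finset β) :
    (s ∪ t).biUnion f = s.biUnion f ∪ t.biUnion f := by
  ext x
  simp only [Finset.mem_biUnion, Finset.mem_union]
  constructor
  · rintro ⟨a, (ha | ha), hx⟩
    exacts [Or.inl ⟨a, ha, hx⟩, Or.inr ⟨a, ha, hx⟩]
  · rintro (⟨a, ha, hx⟩ | ⟨a, ha, hx⟩)
    exacts [⟨a, Or.inl ha, hx⟩, ⟨a, Or.inr ha, hx⟩]

/-- Pair up an even star: a finset of edges all containing `v` decomposes into 2-paths. -/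
lemma star_decomp {V : Type*} [DecidableEq V] (v : V) :
    ∀ (n : ℕ) (S : Finset (Sym2 V)), S.card = n → Even S.card → (∀ e ∈ S, v ∈ e) →
    ∃ P : Finset (Finset (Sym2 V)),
      (∀ A ∈ P, A.card = 2 ∧ ∃ w : V, ∀ e ∈ A, w ∈ e) ∧
      (P : Set (Finset (Sym2 V))).PairwiseDisjoint id ∧
      P.biUnion id = S := by
  intro n
  induction n using Nat.strong_induction_on with
  | _ n ih =>
    intro S hcard heven hv
    rcases S.eq_empty_or_nonempty with rfl | ⟨a, ha⟩
    · exact ⟨∅, by simp, by simp, by simp⟩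
    · have h2 : 2 ≤ S.card := by
        rcases heven with ⟨k, hk⟩
        have : S.card ≠ 0 := by simpa using S.card_ne_zero_of_mem ha
        omega
      obtain ⟨b, hb⟩ : (S.erase a).Nonempty := by
        rw [← Finset.card_pos, Finset.card_erase_of_mem ha]; omega
      have hba : b ≠ a := Finset.ne_of_mem_erase hb
      have hbS : b ∈ S := Finset.mem_of_mem_erase hb
      set S' := (S.erase a).erase b with hS'
      have hS'sub : S' ⊆ S := fun x hx =>
        Finset.mem_of_mem_erase (Finset.mem_of_mem_erase hx)
      have haS' : a ∉ S' := fun h => (Finset.ne_of_mem_erase (Finset.mem_of_mem_erase h)) rfl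
      have hbS' : b ∉ S' := fun h => (Finset.ne_of_mem_erase h) rfl
      have hnlt : 2 ≤ n := hcard ▸ h2
      have hcard' : S'.card = n - 2 := by
        rw [hS', Finset.card_erase_of_mem hb, Finset.card_erase_of_mem ha, hcard]
        omega
      obtain ⟨P', hP1, hP2, hP3⟩ := ih (n - 2) (by omega) S' hcard'
        (by rw [hcard']; rcases heven with ⟨k, hk⟩; rw [hcard] at hk; exact ⟨k - 1, by omega⟩)
        (fun e he => hv e (hS'sub he))
      have hSsplit : S = {a, b} ∪ S' := by
        ext x
        simp only [Finset.mem_union, Finset.mem_insert, Finset.mem_singleton, hS',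
          Finset.mem_erase]
        constructor
        · intro hx
          by_cases h1 : x = a
          · tauto
          by_cases hx2 : x = b
          · tauto
          · exact Or.inr ⟨hx2, h1, hx⟩
        · rintro (h | ⟨-, -, hx⟩)
          · rcases h with rfl | rfl
            exacts [ha, hbS]
          · exact hx
      have hdisjAB : ∀ A ∈ P', Disjoint ({a, b} : Finset (Sym2 V)) A := by
        intro A hA
        rw [Finset.disjoint_left]
        intro x hx hxA
        have hxS' : x ∈ S' := by
          rw [← hP3]; exact Finset.mem_biUnion.mpr ⟨A, hA, hxA⟩
        rcases Finset.mem_insert.mp hx with rfl | hx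
        · exact haS' hxS'
        · rw [Finset.mem_singleton] at hx; subst hx; exact hbS' hxS'
      have habP' : ({a, b} : Finset (Sym2 V)) ∉ P' := by
        intro h
        have := hdisjAB _ h
        simp at this
      refine ⟨insert {a, b} P', ?_, ?_, ?_⟩
      · intro A hA
        rcases Finset.mem_insert.mp hA with rfl | hA
        · refine ⟨?_, v, fun e he => ?_⟩
          · rw [Finset.card_insert_of_notMem (by simpa using hba.symm)]; simp
          · rcases Finset.mem_insert.mp he with rfl | he
            · exact hv _ ha
            · rw [Finset.mem_singleton] at he; subst he; exact hv _ hbS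
        · exact hP1 A hA
      · rw [Finset.coe_insert]
        refine hP2.insert ?_
        intro A hA _
        exact hdisjAB A hA
      · rw [Finset.biUnion_insert, hP3, hSsplit]
        rfl

/-- The key recursion: given a "token" assignment `pos`/`oth` of directed edges
satisfying the invariants, the edge set decomposes into 2-paths. -/
lemma key {V : Type*} [DecidableEq V] (ρ : V → ℕ) (hinj : Function.Injective ρ)
    (r : V) (hr : ∀ v, v ≠ r → ρ r < ρ v) :
    ∀ (n : ℕ) (E : Finset (Sym2 V)) (pos oth : Sym2 V → V),
      (∑ e ∈ E, (ρ (pos e) + 1)) ≤ n →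
      (∀ e ∈ E, e = s(pos e, oth e) ∧ pos e ≠ oth e) →
      (∀ e ∈ E, ρ (pos e) < ρ (oth e) → ∀ f ∈ E, ρ (pos f) < ρ (oth e)) →
      (∀ w, w ≠ r → (∃ e ∈ E, w ∈ e) →
        (∃ e ∈ E, pos e = w ∧ ρ (oth e) < ρ w) ∨ ∀ f ∈ E, ρ (pos f) < ρ w) →
      Even E.card →
      ∃ P : Finset (Finset (Sym2 V)),
        (∀ A ∈ P, A.card = 2 ∧ ∃ v : V, ∀ e ∈ A, v ∈ e) ∧
        (P : Set (Finset (Sym2 V))).PairwiseDisjoint id ∧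
        P.biUnion id = E := by
  intro n
  induction n using Nat.strong_induction_on with
  | _ n ih =>
    intro E pos oth hm h1 h2 h3 h4
    rcases E.eq_empty_or_nonempty with rfl | hne
    · exact ⟨∅, by simp, by simp, by simp⟩
    obtain ⟨e₀, he₀, hmax⟩ := Finset.exists_max_image E (fun e => ρ (pos e)) hne
    set v := pos e₀ with hv
    have hmem : ∀ e ∈ E, pos e ∈ e := by
      intro e he
      have h := Sym2.mem_mk_left (pos e) (oth e)
      rwa [← (h1 e he).1] at h
    by_cases hvr : v = r
    · -- all tokens at the root: every edge contains r
      have hall : ∀ f ∈ E, pos f = r := by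
        intro f hf
        by_contra hfr
        have hA := hr _ hfr
        have hB := hmax f hf
        rw [hvr] at hB
        omega
      refine star_decomp r E.card E rfl h4 ?_
      intro e he
      rw [← hall e he]
      exact hmem e he
    · -- v ≠ r : v holds a token, so it holds a down-token
      have hvd : ∃ d ∈ E, pos d = v ∧ ρ (oth d) < ρ v := by
        have hinc : ∃ e ∈ E, v ∈ e := ⟨e₀, he₀, hv ▸ hmem e₀ he₀⟩
        rcases h3 v hvr hinc with h | h
        · obtain ⟨d, hd, hdp, hdlt⟩ := h; exact ⟨d, hd, hdp, hdlt⟩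
        · exact absurd (h e₀ he₀) (by rw [← hv]; omega)
      obtain ⟨d, hdE, hdpos, hdlt⟩ := hvd
      set T := E.filter (fun e => pos e = v) with hT
      have hTsub : T ⊆ E := Finset.filter_subset _ _
      have hdT : d ∈ T := Finset.mem_filter.mpr ⟨hdE, hdpos⟩
      have hTne : T.Nonempty := ⟨d, hdT⟩
      have hTv : ∀ e ∈ T, v ∈ e := by
        intro e he
        obtain ⟨heE, hep⟩ := Finset.mem_filter.mp he
        rw [← hep]
        exact hmem e heE
      -- helper: edges not in T have strictly smaller position
      have hnotT : ∀ f ∈ E, f ∉ T → ρ (pos f) < ρ v := by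
        intro f hf hfT
        have h1' : ρ (pos f) ≤ ρ v := hmax f hf
        have h2' : pos f ≠ v := fun h => hfT (Finset.mem_filter.mpr ⟨hf, h⟩)
        exact lt_of_le_of_ne h1' (fun h => h2' (hinj h))
      by_cases hpar : Even T.card
      · -- even bundle: pair up all of T, recurse on E \ T
        set E' := E \ T with hE'
        have hE'sub : E' ⊆ E := Finset.sdiff_subset
        have hcardE' : E'.card = E.card - T.card := Finset.card_sdiff_of_subset hTsub
        have hmeas : (∑ e ∈ E', (ρ (pos e) + 1)) < n := by
          have hsplit : (∑ e ∈ E, (ρ (pos e) + 1)) =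
              (∑ e ∈ E', (ρ (pos e) + 1)) + (∑ e ∈ T, (ρ (pos e) + 1)) := by
            rw [hE', Finset.sum_sdiff hTsub]
          have hTc : 1 ≤ T.card := Finset.card_pos.mpr hTne
          have hpos : T.card ≤ ∑ e ∈ T, (ρ (pos e) + 1) := by
            calc T.card = ∑ _e ∈ T, 1 := by simp
            _ ≤ ∑ e ∈ T, (ρ (pos e) + 1) := Finset.sum_le_sum (fun e _ => by omega)
          omega
        obtain ⟨P', hP1, hP2, hP3⟩ := ih _ hmeas E' pos oth le_rfl
          (fun e he => h1 e (hE'sub he))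
          (fun e he hup f hf => h2 e (hE'sub he) hup f (hE'sub hf))
          (by
            intro w hwr hwin
            have hwE : ∃ e ∈ E, w ∈ e := by
              obtain ⟨e, he, hwe⟩ := hwin; exact ⟨e, hE'sub he, hwe⟩
            rcases h3 w hwr hwE with ⟨ew, hew, hewp, hewlt⟩ | hret
            · by_cases hwv : w = v
              · subst hwv
                right
                intro f hf
                exact hnotT f (hE'sub hf) (fun hfT => (Finset.mem_sdiff.mp hf).2 hfT)
              · left
                refine ⟨ew, Finset.mem_sdiff.mpr ⟨hew, fun hewT => ?_⟩, hewp, hewlt⟩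
                exact hwv (by rw [← hewp, (Finset.mem_filter.mp hewT).2])
            · exact Or.inr fun f hf => hret f (hE'sub hf))
          (by
            rw [hcardE']
            rcases h4 with ⟨k, hk⟩; rcases hpar with ⟨m, hmm⟩
            have := Finset.card_le_card hTsub
            exact ⟨k - m, by omega⟩)
        obtain ⟨Q, hQ1, hQ2, hQ3⟩ := star_decomp v T.card T rfl hpar hTv
        refine ⟨Q ∪ P', ?_, ?_, ?_⟩
        · intro A hA
          rcases Finset.mem_union.mp hA with hA | hA
          · exact hQ1 A hA
          · exact hP1 A hA
        · rw [Finset.coe_union]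
          intro A hA B hB hAB
          have hsub : ∀ C, C ∈ Q ∪ P' → C ⊆ T ∨ C ⊆ E' := by
            intro C hC
            rcases Finset.mem_union.mp hC with hC | hC
            · exact Or.inl (hQ3 ▸ Finset.subset_biUnion_of_mem id hC)
            · exact Or.inr (hP3 ▸ Finset.subset_biUnion_of_mem id hC)
          have hTE' : Disjoint T E' := Finset.disjoint_sdiff
          rcases hA with hA | hA <;> rcases hB with hB | hB
          · exact hQ2 hA hB hAB
          · exact Finset.disjoint_of_subset_left (hQ3 ▸ Finset.subset_biUnion_of_mem id hA)
              (Finset.disjoint_of_subset_right (hP3 ▸ Finset.subset_biUnion_of_mem id hB) hTE')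
          · exact Finset.disjoint_of_subset_left (hP3 ▸ Finset.subset_biUnion_of_mem id hA)
              (Finset.disjoint_of_subset_right (hQ3 ▸ Finset.subset_biUnion_of_mem id hB)
                hTE'.symm)
          · exact hP2 hA hB hAB
        · rw [biUnion_union_eq, hQ3, hP3, hE']
          exact Finset.union_sdiff_of_subset hTsub
      · -- odd bundle: pair up T \ {d}, move token d down, recurse
        set R := T.erase d with hR
        have hRsub : R ⊆ E := fun x hx => hTsub (Finset.mem_of_mem_erase hx)
        have hdR : d ∉ R := Finset.notMem_erase _ _
        set E' := E \ R with hE'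
        have hE'sub : E' ⊆ E := Finset.sdiff_subset
        have hdE' : d ∈ E' := Finset.mem_sdiff.mpr ⟨hdE, hdR⟩
        set pos' := Function.update pos d (oth d) with hpos'
        set oth' := Function.update oth d (pos d) with hoth'
        have hpos'd : pos' d = oth d := Function.update_self _ _ _
        have hoth'd : oth' d = pos d := Function.update_self _ _ _
        have hpos'ne : ∀ f, f ≠ d → pos' f = pos f := fun f hf =>
          Function.update_of_ne hf _ _
        have hoth'ne : ∀ f, f ≠ d → oth' f = oth f := fun f hf =>
          Function.update_of_ne hf _ _
        -- everything in E' other than d is not in T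
        have hE'notT : ∀ f ∈ E', f ≠ d → f ∉ T := by
          intro f hf hfd hfT
          exact (Finset.mem_sdiff.mp hf).2 (Finset.mem_erase.mpr ⟨hfd, hfT⟩)
        have hE'small : ∀ f ∈ E', ρ (pos' f) < ρ v := by
          intro f hf
          by_cases hfd : f = d
          · subst hfd; rw [hpos'd]; exact hdlt
          · rw [hpos'ne f hfd]
            exact hnotT f (hE'sub hf) (hE'notT f hf hfd)
        have hmeas : (∑ e ∈ E', (ρ (pos' e) + 1)) < n := by
          have hsum1 : (∑ e ∈ E', (ρ (pos' e) + 1)) =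
              (∑ e ∈ E'.erase d, (ρ (pos e) + 1)) + (ρ (oth d) + 1) := by
            rw [← Finset.sum_erase_add _ _ hdE', hpos'd]
            congr 1
            exact Finset.sum_congr rfl fun x hx =>
              by rw [hpos'ne x (Finset.ne_of_mem_erase hx)]
          have hsum2 : (∑ e ∈ E, (ρ (pos e) + 1)) =
              (∑ e ∈ E.erase d, (ρ (pos e) + 1)) + (ρ (pos d) + 1) := by
            rw [Finset.sum_erase_add _ _ hdE]
          have hsub' : E'.erase d ⊆ E.erase d := fun x hx =>
            Finset.mem_erase.mpr ⟨Finset.ne_of_mem_erase hx,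
              hE'sub (Finset.mem_of_mem_erase hx)⟩
          have hle : (∑ e ∈ E'.erase d, (ρ (pos e) + 1)) ≤
              (∑ e ∈ E.erase d, (ρ (pos e) + 1)) :=
            Finset.sum_le_sum_of_subset hsub'
          rw [hdpos] at *
          omega
        have hRcard : R.card = T.card - 1 := Finset.card_erase_of_mem hdT
        obtain ⟨P', hP1, hP2, hP3⟩ := ih _ hmeas E' pos' oth' le_rfl
          (by
            intro e he
            by_cases hed : e = d
            · subst hed
              rw [hpos'd, hoth'd]
              obtain ⟨heq, hne⟩ := h1 e hdE
              exact ⟨by rw [Sym2.eq_swap]; exact heq, fun h => hne h.symm⟩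
            · rw [hpos'ne e hed, hoth'ne e hed]
              exact h1 e (hE'sub he))
          (by
            intro e he hup f hf
            by_cases hed : e = d
            · subst hed
              rw [hoth'd, hdpos]
              exact hE'small f hf
            · rw [hpos'ne e hed, hoth'ne e hed] at hup
              rw [hoth'ne e hed]
              have h2' := h2 e (hE'sub he) hup
              by_cases hfd : f = d
              · subst hfd
                rw [hpos'd]
                have hdv := h2' f hdE
                rw [hdpos] at hdv
                omega
              · rw [hpos'ne f hfd]
                exact h2' f (hE'sub hf))
          (by
            intro w hwr hwin
            have hwE : ∃ e ∈ E, w ∈ e := by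
              obtain ⟨e, he, hwe⟩ := hwin; exact ⟨e, hE'sub he, hwe⟩
            rcases h3 w hwr hwE with ⟨ew, hew, hewp, hewlt⟩ | hret
            · by_cases hwv : w = v
              · subst hwv
                right
                exact hE'small
              · left
                have hewd : ew ≠ d := by
                  intro h
                  exact hwv (by rw [← hewp, h, hdpos])
                have hewT : ew ∉ T := by
                  intro hT
                  exact hwv (by rw [← hewp, (Finset.mem_filter.mp hT).2])
                refine ⟨ew, Finset.mem_sdiff.mpr ⟨hew, fun h => hewT (Finset.mem_of_mem_erase h)⟩,
                  ?_, ?_⟩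
                · rw [hpos'ne ew hewd]; exact hewp
                · rw [hoth'ne ew hewd]; exact hewlt
            · right
              intro f hf
              by_cases hfd : f = d
              · subst hfd
                rw [hpos'd]
                have := hret f hdE
                rw [hdpos] at this
                omega
              · rw [hpos'ne f hfd]
                exact hret f (hE'sub hf))
          (by
            have hcardE' : E'.card = E.card - R.card := Finset.card_sdiff_of_subset hRsub
            rcases h4 with ⟨k, hk⟩
            have hTodd : ¬Even T.card := hpar
            rw [Nat.not_even_iff_odd] at hTodd
            rcases hTodd with ⟨m, hmm⟩
            have := Finset.card_le_card hTsub
            exact ⟨k - m, by omega⟩)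
        have hRv : ∀ e ∈ R, v ∈ e := fun e he => hTv e (Finset.mem_of_mem_erase he)
        have hReven : Even R.card := by
          rw [hRcard]
          rw [Nat.not_even_iff_odd] at hpar
          rcases hpar with ⟨m, hmm⟩
          exact ⟨m, by omega⟩
        obtain ⟨Q, hQ1, hQ2, hQ3⟩ := star_decomp v R.card R rfl hReven hRv
        refine ⟨Q ∪ P', ?_, ?_, ?_⟩
        · intro A hA
          rcases Finset.mem_union.mp hA with hA | hA
          · exact hQ1 A hA
          · exact hP1 A hA
        · rw [Finset.coe_union]
          intro A hA B hB hAB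
          have hRE' : Disjoint R E' := Finset.disjoint_sdiff
          rcases hA with hA | hA <;> rcases hB with hB | hB
          · exact hQ2 hA hB hAB
          · exact Finset.disjoint_of_subset_left (hQ3 ▸ Finset.subset_biUnion_of_mem id hA)
              (Finset.disjoint_of_subset_right (hP3 ▸ Finset.subset_biUnion_of_mem id hB) hRE')
          · exact Finset.disjoint_of_subset_left (hP3 ▸ Finset.subset_biUnion_of_mem id hA)
              (Finset.disjoint_of_subset_right (hQ3 ▸ Finset.subset_biUnion_of_mem id hB)
                hRE'.symm)
          · exact hP2 hA hB hAB
        · rw [biUnion_union_eq, hQ3, hP3, hE']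
          exact Finset.union_sdiff_of_subset hRsub

/-- If `G` is a finite connected simple graph with an even number of edges, then
the edge set of `G` can be partitioned into 2-paths, i.e. into pairs of distinct
edges sharing a common endpoint.  (Equivalently, the line graph of `G` has a
perfect matching.) -/
theorem stmt_5 {V : Type*} [Fintype V] [DecidableEq V]
    (G : SimpleGraph V) [DecidableRel G.Adj]
    (hconn : G.Connected) (heven : Even G.edgeFinset.card) :
    ∃ P : Finset (Finset (Sym2 V)),
      (∀ A ∈ P, A.card = 2 ∧ ∃ v : V, ∀ e ∈ A, v ∈ e) ∧
      (P : Set (Finset (Sym2 V))).PairwiseDisjoint id ∧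
      P.biUnion id = G.edgeFinset := by
  haveI : Nonempty V := hconn.nonempty
  classical
  set r : V := Classical.arbitrary V with hrdef
  set N : ℕ := Fintype.card V with hN
  have hNpos : 0 < N := Fintype.card_pos
  set idx : V → ℕ := fun v => ((Fintype.equivFin V) v : ℕ) with hidx
  have hidxlt : ∀ v, idx v < N := fun v => ((Fintype.equivFin V) v).is_lt
  have hidxinj : Function.Injective idx := by
    intro a b h
    exact (Fintype.equivFin V).injective (Fin.ext h)
  set ρ : V → ℕ := fun v => G.dist r v * N + idx v with hρ
  have hinj : Function.Injective ρ := by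
    intro a b h
    simp only [hρ] at h
    have ha := hidxlt a
    have hb := hidxlt b
    have hdista : G.dist r a = G.dist r b := by
      by_contra hne
      rcases Nat.lt_or_ge (G.dist r a) (G.dist r b) with hlt | hge
      · nlinarith
      · have : G.dist r b < G.dist r a := by omega
        nlinarith
    rw [hdista] at h
    have : idx a = idx b := by omega
    exact hidxinj this
  have hdistpos : ∀ v, v ≠ r → 0 < G.dist r v := by
    intro v hvr
    exact hconn.pos_dist_of_ne (Ne.symm hvr)
  have hrmin : ∀ v, v ≠ r → ρ r < ρ v := by
    intro v hvr
    have h1 : ρ r = idx r := by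
      simp [hρ, SimpleGraph.dist_self]
    have h2 : N ≤ ρ v := by
      have := hdistpos v hvr
      have := hidxlt v
      calc N ≤ G.dist r v * N := Nat.le_mul_of_pos_left N (hdistpos v hvr)
      _ ≤ ρ v := Nat.le_add_right _ _
    have := hidxlt r
    omega
  -- every non-root vertex has a neighbor with strictly smaller ρ
  have hdown : ∀ v, v ≠ r → ∃ u, G.Adj v u ∧ ρ u < ρ v := by
    intro v hvr
    obtain ⟨p, hp⟩ := hconn.exists_walk_length_eq_dist r v
    have hplen : 0 < p.length := by
      rw [hp]; exact hdistpos v hvr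
    obtain ⟨u, hadj, q', hq'⟩ := SimpleGraph.Walk.exists_eq_cons_of_ne hvr p.reverse
    refine ⟨u, hadj, ?_⟩
    have hdistu : G.dist r u ≤ q'.length := by
      have h := SimpleGraph.dist_le q'
      rwa [SimpleGraph.dist_comm] at h
    have hq'len : q'.length = p.length - 1 := by
      have h2 : p.reverse.length = q'.length + 1 := by rw [hq']; simp
      have h3 : p.reverse.length = p.length := SimpleGraph.Walk.length_reverse p
      omega
    have hlt : G.dist r u < G.dist r v := by
      rw [← hp]
      omega
    simp only [hρ]
    have := hidxlt u
    have := hidxlt v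
    nlinarith
  -- initial positions: each edge sits at its endpoint of larger ρ
  set pos : Sym2 V → V := Sym2.lift ⟨fun a b => if ρ a < ρ b then b else a, by
    intro a b
    dsimp only
    rcases lt_trichotomy (ρ a) (ρ b) with h | h | h
    · rw [if_pos h, if_neg (by omega)]
    · rw [if_neg (by omega), if_neg (by omega)]
      exact hinj h
    · rw [if_neg (by omega), if_pos h]⟩ with hposdef
  set oth : Sym2 V → V := Sym2.lift ⟨fun a b => if ρ a < ρ b then a else b, by
    intro a b
    dsimp only
    rcases lt_trichotomy (ρ a) (ρ b) with h | h | h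
    · rw [if_pos h, if_neg (by omega)]
    · rw [if_neg (by omega), if_neg (by omega)]
      exact (hinj h).symm
    · rw [if_neg (by omega), if_pos h]⟩ with hothdef
  have hkey1 : ∀ e ∈ G.edgeFinset, e = s(pos e, oth e) ∧ pos e ≠ oth e := by
    intro e he
    induction e with
    | _ a b =>
      have hadj : G.Adj a b := by
        rwa [SimpleGraph.mem_edgeFinset, SimpleGraph.mem_edgeSet] at he
      have hab : a ≠ b := hadj.ne
      simp only [hposdef, hothdef, Sym2.lift_mk]
      by_cases h : ρ a < ρ b
      · rw [if_pos h, if_pos h]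
        exact ⟨Sym2.eq_swap, fun hc => (by omega : ¬ ρ b = ρ a) (hc ▸ rfl)⟩
      · rw [if_neg h, if_neg h]
        refine ⟨rfl, fun hc => hab hc⟩
  have hkey2 : ∀ e ∈ G.edgeFinset, ¬ ρ (pos e) < ρ (oth e) := by
    intro e he
    induction e with
    | _ a b =>
      simp only [hposdef, hothdef, Sym2.lift_mk]
      by_cases h : ρ a < ρ b
      · rw [if_pos h, if_pos h]; omega
      · rw [if_neg h, if_neg h]; omega
  have hkey3 : ∀ w, w ≠ r → (∃ e ∈ G.edgeFinset, w ∈ e) →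
      (∃ e ∈ G.edgeFinset, pos e = w ∧ ρ (oth e) < ρ w) ∨
        ∀ f ∈ G.edgeFinset, ρ (pos f) < ρ w := by
    intro w hwr _
    obtain ⟨u, hadj, hult⟩ := hdown w hwr
    left
    refine ⟨s(w, u), ?_, ?_, ?_⟩
    · rw [SimpleGraph.mem_edgeFinset, SimpleGraph.mem_edgeSet]; exact hadj
    · simp only [hposdef, Sym2.lift_mk]
      rw [if_neg (by omega)]
    · simp only [hothdef, Sym2.lift_mk]
      rw [if_neg (by omega)]
      exact hult
  exact key ρ hinj r hrmin _ G.edgeFinset pos oth le_rfl hkey1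
    (fun e he hup => absurd hup (hkey2 e he)) hkey3 heven
end

section
/- If G is a connected graph containing an even cycle, then the vertex set of the line graph of G can be partitioned into a matching together with at most one triangle; that is, either the line graph has a perfect matching, or its vertices partition into the endpoints of a matching plus one triangle. -/
/-!
Orient the edges of `G`. Edges with a common head pairwise share that vertex, so they form a
clique of the line graph; hence it suffices to orient `G` so that all in-degrees are even except
possibly one, which is not `1`. Every in-star then splits into pairs, and the odd one into pairs
and a single triangle.

Reversing the edges of a trail changes the parity of the in-degree only at its two ends, so in a
connected graph all odd in-degrees can be moved onto one chosen vertex. If the number of edges is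
even, this gives all in-degrees even. If it is odd, use the even cycle `C`: the number of edges
outside `C` is odd, so some vertex `a` of `C` is the head of an odd number of edges outside `C`.
Move the odd in-degree to `a` along `C`, and reverse all of `C` if none of its edges points to
`a`; this keeps every parity and makes `a` the head of an edge of `C` and of an edge outside `C`.
-/

open Finset

namespace SimpleGraph

variable {V : Type*} {G : SimpleGraph V}

lemma exists_dart_edge_eq (e : G.edgeSet) : ∃ d : G.Dart, d.edge = e := by
  obtain ⟨e, he⟩ := e
  induction e using Sym2.ind with
  | _ x y => exact ⟨⟨(x, y), he⟩, rfl⟩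

lemma Walk.card_filter_mem_edges [DecidableEq V] [Fintype G.edgeSet] {u w : V} (p : G.Walk u w)
    (hp : p.edges.Nodup) (q : Sym2 V → Prop) [DecidablePred q] :
    #{e : G.edgeSet | (e : Sym2 V) ∈ p.edges ∧ q e} = p.edges.countP (fun e => q e) := by
  rw [List.countP_eq_length_filter, ← List.toFinset_card_of_nodup (hp.filter _)]
  refine card_bij (fun e _ => e.1) ?_ (fun e _ f _ h => Subtype.ext h) ?_
  · intro e he
    simp only [mem_filter, mem_univ, true_and] at he
    simp [he.1, he.2]
  · intro e he
    simp only [List.mem_toFinset, List.mem_filter, decide_eq_true_eq] at he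
    exact ⟨⟨e, p.edges_subset_edgeSet he.1⟩, by simp [he.1, he.2], rfl⟩

structure EdgeOrientation (G : SimpleGraph V) where
  dart : G.edgeSet → G.Dart
  dart_edge (e : G.edgeSet) : (dart e).edge = e

namespace EdgeOrientation

instance : Nonempty G.EdgeOrientation :=
  ⟨⟨fun e => (exists_dart_edge_eq e).choose, fun e => (exists_dart_edge_eq e).choose_spec⟩⟩

variable (o : G.EdgeOrientation)

def tail (e : G.edgeSet) : V := (o.dart e).fst

def head (e : G.edgeSet) : V := (o.dart e).snd

lemma tail_ne_head (e : G.edgeSet) : o.tail e ≠ o.head e := (o.dart e).fst_ne_snd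

lemma mem_iff_eq_tail_or_eq_head {e : G.edgeSet} {v : V} :
    v ∈ (e : Sym2 V) ↔ v = o.tail e ∨ v = o.head e := by
  rw [← o.dart_edge e, Dart.edge, Sym2.mem_iff, tail, head]

lemma head_mem (e : G.edgeSet) : o.head e ∈ (e : Sym2 V) :=
  o.mem_iff_eq_tail_or_eq_head.2 (.inr rfl)

lemma lineGraph_adj_of_head_eq {e f : G.edgeSet} (hef : e ≠ f) (h : o.head e = o.head f) :
    G.lineGraph.Adj e f :=
  lineGraph_adj_iff_exists.2 ⟨hef, o.head e, o.head_mem e, h ▸ o.head_mem f⟩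

section reverseEdges

variable [DecidableEq V]

def reverseEdges (L : List (Sym2 V)) : G.EdgeOrientation where
  dart e := if (e : Sym2 V) ∈ L then (o.dart e).symm else o.dart e
  dart_edge e := by split_ifs <;> simp [o.dart_edge]

variable {o} {L : List (Sym2 V)} {e : G.edgeSet}

lemma head_reverseEdges_of_mem (he : (e : Sym2 V) ∈ L) :
    (o.reverseEdges L).head e = o.tail e := by
  simp [head, tail, reverseEdges, he]

lemma head_reverseEdges_of_notMem (he : (e : Sym2 V) ∉ L) :
    (o.reverseEdges L).head e = o.head e := by
  simp [head, reverseEdges, he]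

end reverseEdges

section indeg

variable [DecidableEq V] [Fintype G.edgeSet]

def indeg (v : V) : ℕ := #{e | o.head e = v}

lemma sum_indeg [Fintype V] : ∑ v, o.indeg v = Fintype.card G.edgeSet :=
  (card_eq_sum_card_fiberwise fun e _ => mem_univ (o.head e)).symm

lemma even_indeg_iff_of_forall_ne [Fintype V] {a : V}
    (h : ∀ v ≠ a, Even (o.indeg v)) :
    Even (o.indeg a) ↔ Even (Fintype.card G.edgeSet) := by
  rw [← o.sum_indeg, ← add_sum_erase _ _ (mem_univ a), Nat.even_add]
  have : Even (∑ v ∈ univ.erase a, o.indeg v) :=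
    even_sum _ fun v hv => h v (ne_of_mem_erase hv)
  tauto

lemma card_head_reverseEdges_add_card_head (L : List (Sym2 V)) (v : V) :
    #{e : G.edgeSet | (e : Sym2 V) ∈ L ∧ (o.reverseEdges L).head e = v} +
      #{e : G.edgeSet | (e : Sym2 V) ∈ L ∧ o.head e = v} =
      #{e : G.edgeSet | (e : Sym2 V) ∈ L ∧ v ∈ (e : Sym2 V)} := by
  rw [← card_union_of_disjoint]
  · congr 1
    ext e
    simp only [mem_union, mem_filter, mem_univ, true_and, o.mem_iff_eq_tail_or_eq_head]
    constructor
    · rintro (⟨he, h⟩ | ⟨he, h⟩)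
      · exact ⟨he, .inl ((head_reverseEdges_of_mem he).symm.trans h).symm⟩
      · exact ⟨he, .inr h.symm⟩
    · rintro ⟨he, h | h⟩
      · exact .inl ⟨he, (head_reverseEdges_of_mem he).trans h.symm⟩
      · exact .inr ⟨he, h.symm⟩
  · rw [disjoint_filter]
    rintro e - ⟨he, h⟩ ⟨-, h'⟩
    exact o.tail_ne_head e ((head_reverseEdges_of_mem he).symm.trans (h.trans h'.symm))

lemma even_indeg_reverseEdges_iff (L : List (Sym2 V)) (v : V) :
    Even ((o.reverseEdges L).indeg v) ↔
      (Even (o.indeg v) ↔ Even #{e : G.edgeSet | (e : Sym2 V) ∈ L ∧ v ∈ (e : Sym2 V)}) := by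
  have hsplit (o' : G.EdgeOrientation) : o'.indeg v =
      #{e : G.edgeSet | (e : Sym2 V) ∈ L ∧ o'.head e = v} +
        #{e : G.edgeSet | (e : Sym2 V) ∉ L ∧ o'.head e = v} := by
    rw [indeg, ← card_filter_add_card_filter_not (fun e : G.edgeSet => (e : Sym2 V) ∈ L),
      filter_filter, filter_filter]
    simp only [and_comm]
  have hout : #{e : G.edgeSet | (e : Sym2 V) ∉ L ∧ (o.reverseEdges L).head e = v} =
      #{e : G.edgeSet | (e : Sym2 V) ∉ L ∧ o.head e = v} := by
    congr 1
    exact filter_congr fun e _ => and_congr_right fun he => by rw [head_reverseEdges_of_notMem he]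
  rw [← o.card_head_reverseEdges_add_card_head L v, hsplit, hsplit o, hout]
  simp only [Nat.even_add]
  tauto

lemma _root_.SimpleGraph.Walk.IsTrail.even_indeg_reverseEdges_iff {u w : V} {p : G.Walk u w}
    (hp : p.IsTrail) (v : V) :
    Even ((o.reverseEdges p.edges).indeg v) ↔
      (Even (o.indeg v) ↔ (u ≠ w → v ≠ u ∧ v ≠ w)) := by
  rw [o.even_indeg_reverseEdges_iff, p.card_filter_mem_edges hp.edges_nodup (v ∈ ·),
    hp.even_countP_edges_iff]

theorem exists_forall_ne_even_indeg [Fintype V] (hG : G.Preconnected) (a : V) :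
    ∃ o : G.EdgeOrientation, ∀ v ≠ a, Even (o.indeg v) := by
  suffices ∀ n (o : G.EdgeOrientation), #{v | v ≠ a ∧ ¬Even (o.indeg v)} = n →
      ∃ o' : G.EdgeOrientation, ∀ v ≠ a, Even (o'.indeg v) from
    this _ (Classical.arbitrary _) rfl
  intro n
  induction n using Nat.strong_induction_on with
  | _ n ih =>
  intro o hn
  by_cases hev : ∀ v ≠ a, Even (o.indeg v)
  · exact ⟨o, hev⟩
  push Not at hev
  obtain ⟨v, hva, hv⟩ := hev
  obtain ⟨p, hp⟩ := (hG v a).exists_isPath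
  refine ih _ ?_ (o.reverseEdges p.edges) rfl
  have hcard : #{x | x ≠ a ∧ ¬Even ((o.reverseEdges p.edges).indeg x)} =
      #(({x | x ≠ a ∧ ¬Even (o.indeg x)} : Finset V).erase v) := by
    congr 1
    ext x
    simp only [mem_filter, mem_erase, mem_univ, true_and, hp.isTrail.even_indeg_reverseEdges_iff]
    by_cases hxv : x = v
    · subst hxv
      tauto
    · tauto
  rw [hcard, ← hn]
  exact card_erase_lt_of_mem (mem_filter.2 ⟨mem_univ v, hva, hv⟩)

lemma exists_mem_support_odd_card_head_eq [Fintype V] {u : V} {c : G.Walk u u} (hc : c.IsTrail)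
    (hlen : Even c.length) (hodd : Odd (Fintype.card G.edgeSet))
    (ho : ∀ v ∉ c.support, Even (o.indeg v)) :
    ∃ a ∈ c.support, Odd #{e : G.edgeSet | (e : Sym2 V) ∉ c.edges ∧ o.head e = a} := by
  by_contra! h
  have hall : ∀ v, Even #{e : G.edgeSet | (e : Sym2 V) ∉ c.edges ∧ o.head e = v} := by
    intro v
    by_cases hv : v ∈ c.support
    · exact Nat.not_odd_iff_even.1 (h v hv)
    · have hfib : univ.filter (fun e : G.edgeSet => (e : Sym2 V) ∉ c.edges ∧ o.head e = v) =
          univ.filter (fun e => o.head e = v) :=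
        filter_congr fun e _ => and_iff_right_of_imp fun hve hec =>
          hv (c.mem_support_iff_exists_mem_edges.2 (.inr ⟨e, hec, hve ▸ o.head_mem e⟩))
      rw [hfib]
      exact ho v hv
  have hcycle : #{e : G.edgeSet | (e : Sym2 V) ∈ c.edges} = c.length := by
    simpa using c.card_filter_mem_edges hc.edges_nodup (fun _ : Sym2 V => True)
  have hsum : ∑ v, #{e : G.edgeSet | (e : Sym2 V) ∉ c.edges ∧ o.head e = v} =
      #{e : G.edgeSet | (e : Sym2 V) ∉ c.edges} := by
    rw [card_eq_sum_card_fiberwise fun e _ => mem_univ (o.head e)]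
    simp only [filter_filter]
  rw [← Nat.not_even_iff_odd, ← card_univ, ← card_filter_add_card_filter_not
    (fun e : G.edgeSet => (e : Sym2 V) ∈ c.edges), hcycle, ← hsum] at hodd
  exact hodd (hlen.add (even_sum _ fun v _ => hall v))

lemma exists_head_eq_of_mem_support {u : V} {c : G.Walk u u} (hc : c.IsTrail) (hnil : ¬c.Nil)
    {a : V} (ha : a ∈ c.support) :
    ∃ o' : G.EdgeOrientation, (∀ v, Even (o'.indeg v) ↔ Even (o.indeg v)) ∧
      (∀ e : G.edgeSet, (e : Sym2 V) ∉ c.edges → o'.head e = o.head e) ∧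
      ∃ e : G.edgeSet, (e : Sym2 V) ∈ c.edges ∧ o'.head e = a := by
  by_cases h : ∃ e : G.edgeSet, (e : Sym2 V) ∈ c.edges ∧ o.head e = a
  · exact ⟨o, fun _ => .rfl, fun _ _ => rfl, h⟩
  push Not at h
  refine ⟨o.reverseEdges c.edges, fun v => by simp [hc.even_indeg_reverseEdges_iff],
    fun e he => head_reverseEdges_of_notMem he, ?_⟩
  obtain ⟨e, hec, hae⟩ := (c.mem_support_iff_exists_mem_edges_of_not_nil hnil).1 ha
  let e' : G.edgeSet := ⟨e, c.edges_subset_edgeSet hec⟩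
  refine ⟨e', hec, (head_reverseEdges_of_mem hec).trans ?_⟩
  rcases o.mem_iff_eq_tail_or_eq_head.1 (show a ∈ (e' : Sym2 V) from hae) with h' | h'
  · exact h'.symm
  · exact absurd h'.symm (h e' hec)

theorem exists_one_lt_indeg_of_isCycle [Fintype V] (hG : G.Preconnected) {u : V}
    {c : G.Walk u u} (hc : c.IsCycle) (hlen : Even c.length)
    (hodd : Odd (Fintype.card G.edgeSet)) :
    ∃ (o : G.EdgeOrientation) (a : V), (∀ v ≠ a, Even (o.indeg v)) ∧ 1 < o.indeg a := by
  have htrail : c.IsTrail := hc.isCircuit.isTrail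
  obtain ⟨o₁, ho₁⟩ := exists_forall_ne_even_indeg hG u
  obtain ⟨a, ha, hra⟩ := o₁.exists_mem_support_odd_card_head_eq htrail hlen hodd
    fun v hv => ho₁ v (ne_of_mem_of_not_mem c.start_mem_support hv).symm
  set o₂ := o₁.reverseEdges (c.takeUntil a ha).edges
  have ho₂ : ∀ v ≠ a, Even (o₂.indeg v) := by
    intro v hva
    rw [(htrail.takeUntil ha).even_indeg_reverseEdges_iff]
    by_cases hvu : v = u
    · subst hvu
      have := (o₁.even_indeg_iff_of_forall_ne ho₁).not.2 (Nat.not_even_iff_odd.2 hodd)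
      tauto
    · have := ho₁ v hvu
      tauto
  obtain ⟨o, hpar, hhead, e₂, he₂, he₂a⟩ := o₂.exists_head_eq_of_mem_support htrail hc.not_nil ha
  refine ⟨o, a, fun v hva => (hpar v).2 (ho₂ v hva), one_lt_card.2 ?_⟩
  have hhead' : ∀ e : G.edgeSet, (e : Sym2 V) ∉ c.edges → o.head e = o₁.head e := fun e he =>
    (hhead e he).trans <| head_reverseEdges_of_notMem fun h =>
      he (c.edges_takeUntil_subset_edges ha h)
  obtain ⟨e₁, he₁⟩ := card_pos.1 hra.pos
  rw [mem_filter] at he₁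
  exact ⟨e₁, mem_filter.2 ⟨mem_univ _, (hhead' e₁ he₁.2.1).trans he₁.2.2⟩, e₂,
    mem_filter.2 ⟨mem_univ _, he₂a⟩, fun h => he₁.2.1 (h ▸ he₂)⟩

theorem exists_indeg_ne_one [Fintype V] (hG : G.Preconnected)
    (hcyc : ∃ (u : V) (c : G.Walk u u), c.IsCycle ∧ Even c.length) :
    ∃ (o : G.EdgeOrientation) (a : V), (∀ v ≠ a, Even (o.indeg v)) ∧ o.indeg a ≠ 1 := by
  obtain ⟨u, c, hc, hlen⟩ := hcyc
  rcases Nat.even_or_odd (Fintype.card G.edgeSet) with hE | hE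
  · obtain ⟨o, ho⟩ := exists_forall_ne_even_indeg hG u
    refine ⟨o, u, ho, fun h => Nat.not_even_one ?_⟩
    rw [← h, o.even_indeg_iff_of_forall_ne ho]
    exact hE
  · obtain ⟨o, a, ho, ha⟩ := exists_one_lt_indeg_of_isCycle hG hc hlen hE
    exact ⟨o, a, ho, ha.ne'⟩

end indeg

end EdgeOrientation

end SimpleGraph

lemma Finset.exists_finpartition_card_two_or_three {α : Type*} [DecidableEq α] (s : Finset α)
    (hs : #s ≠ 1) :
    ∃ Q : Finpartition s, (∀ A ∈ Q.parts, #A = 2 ∨ #A = 3) ∧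
      #{A ∈ Q.parts | #A = 3} = #s % 2 :=
  have h : (#s - 3 * (#s % 2)) / 2 * 2 + #s % 2 * (2 + 1) = #s := by omega
  ⟨(⊥ : Finpartition s).equitabilise h,
    fun _ hA => Finpartition.card_eq_of_mem_parts_equitabilise hA,
    Finpartition.card_filter_equitabilise_big _ h⟩

theorem Finset.exists_partition_card_two_or_three_of_fibers {α β : Type*} [Fintype α]
    [DecidableEq α] [Fintype β] [DecidableEq β] (f : α → β) (a : β)
    (heven : ∀ b ≠ a, Even #{x | f x = b}) (ha : #{x | f x = a} ≠ 1) :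
    ∃ P : Finset (Finset α),
      (∀ A ∈ P, (#A = 2 ∨ #A = 3) ∧ ∀ x ∈ A, ∀ y ∈ A, f x = f y) ∧
      #{A ∈ P | #A = 3} ≤ 1 ∧ (P : Set (Finset α)).PairwiseDisjoint id ∧ P.biUnion id = univ := by
  have hne (b : β) : #{x | f x = b} ≠ 1 := by
    by_cases hb : b = a
    · exact hb ▸ ha
    · exact fun h => Nat.not_even_one (h ▸ heven b hb)
  choose Q hQ hQ₃ using fun b => exists_finpartition_card_two_or_three _ (hne b)
  have hfib : (univ : Finset β).SupIndep fun b => ({x | f x = b} : Finset α) := by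
    rw [supIndep_iff_pairwiseDisjoint]
    intro b _ b' _ hbb'
    exact disjoint_filter.2 fun x _ hx hx' => hbb' (hx.symm.trans hx')
  let P := Finpartition.combine Q hfib
  have hmem {A : Finset α} : A ∈ P.parts ↔ ∃ b, A ∈ (Q b).parts := by
    simp [P]
  refine ⟨P.parts, fun A hA => ?_, ?_, P.disjoint, ?_⟩
  · obtain ⟨b, hA⟩ := hmem.1 hA
    have hAb := (Q b).le hA
    refine ⟨hQ b A hA, fun x hx y hy => ?_⟩
    rw [(mem_filter.1 (hAb hx)).2, (mem_filter.1 (hAb hy)).2]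
  · calc #{A ∈ P.parts | #A = 3} ≤ #{A ∈ (Q a).parts | #A = 3} := by
          refine card_le_card fun A hA => ?_
          obtain ⟨hA, hA₃⟩ := mem_filter.1 hA
          obtain ⟨b, hA⟩ := hmem.1 hA
          have hb : 0 < #{A ∈ (Q b).parts | #A = 3} := card_pos.2 ⟨A, mem_filter.2 ⟨hA, hA₃⟩⟩
          obtain rfl : b = a := by
            by_contra hba
            rw [hQ₃, Nat.even_iff.1 (heven b hba)] at hb
            exact lt_irrefl 0 hb
          exact mem_filter.2 ⟨hA, hA₃⟩
      _ ≤ 1 := by rw [hQ₃]; omega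
  · rw [P.biUnion_parts]
    exact eq_univ_of_forall fun x => mem_sup.2 ⟨f x, mem_univ _, mem_filter.2 ⟨mem_univ _, rfl⟩⟩

/-- If `G` is a finite connected simple graph containing an even cycle, then the
vertex set of the line graph of `G` (i.e. the edge set of `G`) can be
partitioned into a matching of the line graph together with at most one
triangle of the line graph: every part is either a pair of adjacent vertices of
the line graph or a triple of pairwise adjacent vertices of the line graph, and
there is at most one triple. -/
theorem stmt_8 {V : Type*} [Fintype V] [DecidableEq V]
    (G : SimpleGraph V) [DecidableRel G.Adj] (hconn : G.Connected)
    (hcyc : ∃ (u : V) (c : G.Walk u u), c.IsCycle ∧ Even c.length) :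
    ∃ P : Finset (Finset G.edgeSet),
      (∀ A ∈ P, (A.card = 2 ∨ A.card = 3) ∧
        (∀ e ∈ A, ∀ f ∈ A, e ≠ f → G.lineGraph.Adj e f)) ∧
      (P.filter (fun A => A.card = 3)).card ≤ 1 ∧
      (P : Set (Finset G.edgeSet)).PairwiseDisjoint id ∧
      P.biUnion id = Finset.univ := by
  obtain ⟨o, a, heven, ha⟩ :=
    SimpleGraph.EdgeOrientation.exists_indeg_ne_one hconn.preconnected hcyc
  obtain ⟨P, hP, hP₃, hdisj, hcover⟩ :=
    exists_partition_card_two_or_three_of_fibers o.head a heven ha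
  refine ⟨P, fun A hA => ⟨(hP A hA).1, fun e he f hf hef => ?_⟩, hP₃, hdisj, hcover⟩
  exact o.lineGraph_adj_of_head_eq hef ((hP A hA).2 e he f hf)
end

section
/- For a single robot moving at unit speed in a metric space, there exists a patrol schedule of latency at most L for the sites in P if and only if there exists a closed tour (cyclic ordering of the sites of P) of total length at most L. -/
/-!
A schedule yields a tour: let `ℓ i` be the last visit to site `i` during `[0, L]` and order the
sites by `ℓ`. The site `k` with the earliest last visit `a` is visited again at some time in
`[L, a + L]`, and between `a` and that time the robot passes through all sites in the sorted order
and back to `k`, so the tour has length at most `(a + L) - a = L`.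

A tour of length `D ≤ L` yields a schedule: walk it over and over, following the unit-speed paths
between consecutive sites. The concatenation is 1-Lipschitz and is back at every site after time
`D`; when `D = 0` all sites coincide and the robot stands still.
-/

open Set Function Finset

section

variable {X : Type*}

theorem dist_le_sub_of_lipschitzWith_one [PseudoMetricSpace X] {g : ℝ → X}
    (hg : LipschitzWith 1 g) {a b : ℝ} (hab : a ≤ b) : dist (g a) (g b) ≤ b - a := by
  simpa [Real.dist_eq, abs_of_nonpos (sub_nonpos.2 hab)] using hg.dist_le_mul a b

theorem lipschitzWith_one_of_dist_le_sub [PseudoMetricSpace X] {g : ℝ → X}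
    (hg : ∀ a b, a ≤ b → dist (g a) (g b) ≤ b - a) : LipschitzWith 1 g := by
  refine LipschitzWith.of_dist_le_mul fun a b => ?_
  rcases le_total a b with hab | hab
  · simpa [Real.dist_eq, abs_of_nonpos (sub_nonpos.2 hab)] using hg a b hab
  · rw [dist_comm (g a), dist_comm a]
    simpa [Real.dist_eq, abs_of_nonpos (sub_nonpos.2 hab)] using hg b a hab

theorem Fin.sum_dist_add_one_eq [PseudoMetricSpace X] {n : ℕ} (q : Fin (n + 1) → X) :
    ∑ i, dist (q i) (q (i + 1)) =
      ∑ i : Fin n, dist (q i.castSucc) (q i.succ) + dist (q (Fin.last n)) (q 0) := by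
  simp only [Fin.sum_univ_castSucc (fun i => dist (q i) (q (i + 1))), Fin.coeSucc_eq_succ,
    Fin.last_add_one]

theorem sum_dist_le_of_lipschitzWith_one [PseudoMetricSpace X] {f : ℝ → X}
    (hf : LipschitzWith 1 f) {n : ℕ} {τ : Fin (n + 1) → ℝ} (hτ : Monotone τ) :
    ∑ i : Fin n, dist (f (τ i.castSucc)) (f (τ i.succ)) ≤ τ (Fin.last n) - τ 0 := by
  have htelescope : ∑ i : Fin n, (τ i.succ - τ i.castSucc) = τ (Fin.last n) - τ 0 := by
    rw [sum_sub_distrib]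
    linarith [Fin.sum_univ_succ τ, Fin.sum_univ_castSucc τ]
  rw [← htelescope]
  exact sum_le_sum fun i _ =>
    dist_le_sub_of_lipschitzWith_one hf (hτ (Fin.castSucc_le_succ i))

theorem exists_revisit_mem_Icc [TopologicalSpace X] [T1Space X] {f : ℝ → X} (hf : Continuous f)
    {s : X} {L a : ℝ}
    (hvis : ∀ t, 0 ≤ t → ∃ u ∈ Icc t (t + L), f u = s)
    (ha : IsGreatest (Icc 0 L ∩ f ⁻¹' {s}) a) :
    ∃ ν ∈ Icc L (a + L), f ν = s := by
  have ha0 : 0 ≤ a := ha.1.1.1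
  by_cases hlater : ∃ u ∈ Ioc a (a + L), f u = s
  · obtain ⟨u, ⟨hau, huL⟩, hu⟩ := hlater
    refine ⟨u, ⟨le_of_not_gt fun huL' => ?_, huL⟩, hu⟩
    exact (ha.2 ⟨⟨ha0.trans hau.le, huL'.le⟩, hu⟩).not_gt hau
  · push Not at hlater
    refine ⟨a + L, ⟨by linarith, le_rfl⟩, ?_⟩
    -- visits in the windows starting just after `a` accumulate at `a + L`
    have hclosure : a + L ∈ closure (f ⁻¹' {s}) := by
      rw [Real.mem_closure_iff]
      intro ε hε
      obtain ⟨u, ⟨hu₁, hu₂⟩, hu⟩ := hvis (a + ε / 2) (by linarith)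
      have hu₃ : a + L < u := lt_of_not_ge fun h => hlater u ⟨by linarith, h⟩ hu
      exact ⟨u, hu, by rw [abs_lt]; constructor <;> linarith⟩
    exact (isClosed_singleton.preimage hf).closure_subset hclosure

theorem exists_perm_sum_dist_le_of_schedule [MetricSpace X] {n : ℕ} {sites : Fin (n + 1) → X}
    {L : ℝ} {f : ℝ → X} (hf : LipschitzWith 1 f)
    (hvis : ∀ (i : Fin (n + 1)) (t : ℝ), 0 ≤ t → ∃ u ∈ Icc t (t + L), f u = sites i) :
    ∃ σ : Equiv.Perm (Fin (n + 1)),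
      ∑ i : Fin (n + 1), dist (sites (σ i)) (sites (σ (i + 1))) ≤ L := by
  have hlast : ∀ i, ∃ a, IsGreatest (Icc 0 L ∩ f ⁻¹' {sites i}) a := fun i => by
    obtain ⟨u, hu, hfu⟩ := hvis i 0 le_rfl
    exact (isCompact_Icc.inter_right (isClosed_singleton.preimage hf.continuous)).exists_isGreatest
      ⟨u, by simpa using hu, hfu⟩
  choose ℓ hℓ using hlast
  have hfℓ : ∀ i, f (ℓ i) = sites i := fun i => (hℓ i).1.2
  set σ := Tuple.sort ℓ
  obtain ⟨ν, ⟨hLν, hνa⟩, hfν⟩ := exists_revisit_mem_Icc hf.continuous (hvis (σ 0)) (hℓ (σ 0))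
  refine ⟨σ, ?_⟩
  rw [Fin.sum_dist_add_one_eq (fun i => sites (σ i))]
  calc ∑ i : Fin n, dist (sites (σ i.castSucc)) (sites (σ i.succ))
        + dist (sites (σ (Fin.last n))) (sites (σ 0))
      = ∑ i : Fin n, dist (f (ℓ (σ i.castSucc))) (f (ℓ (σ i.succ)))
        + dist (f (ℓ (σ (Fin.last n)))) (f ν) := by simp only [hfℓ, hfν]
    _ ≤ (ℓ (σ (Fin.last n)) - ℓ (σ 0)) + (ν - ℓ (σ (Fin.last n))) :=
        add_le_add (sum_dist_le_of_lipschitzWith_one hf (Tuple.monotone_sort ℓ))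
          (dist_le_sub_of_lipschitzWith_one hf ((hℓ _).1.1.2.trans hLν))
    _ ≤ L := by linarith

open Fin.NatCast in
theorem periodic_natCast {n : ℕ} (q : Fin (n + 1) → X) :
    Periodic (fun j : ℕ => q j) (n + 1) := fun j => by
  simp

section ArrivalTime

variable [PseudoMetricSpace X] (p : ℕ → X)

def arrivalTime (j : ℕ) : ℝ := ∑ m ∈ range j, dist (p m) (p (m + 1))

@[simp]
theorem arrivalTime_zero : arrivalTime p 0 = 0 := sum_range_zero _

theorem arrivalTime_succ (j : ℕ) :
    arrivalTime p (j + 1) = arrivalTime p j + dist (p j) (p (j + 1)) :=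
  sum_range_succ _ j

theorem arrivalTime_mono : Monotone (arrivalTime p) :=
  monotone_nat_of_le_succ fun j => by
    rw [arrivalTime_succ]
    exact le_add_of_nonneg_right dist_nonneg

theorem arrivalTime_nonneg (j : ℕ) : 0 ≤ arrivalTime p j := by
  simpa using arrivalTime_mono p (Nat.zero_le j)

theorem dist_le_arrivalTime_sub {i j : ℕ} (hij : i ≤ j) :
    dist (p i) (p j) ≤ arrivalTime p j - arrivalTime p i := by
  rw [arrivalTime, arrivalTime, ← sum_Ico_eq_sub _ hij]
  exact dist_le_Ico_sum_dist p hij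

variable {p}

theorem arrivalTime_add_period {m : ℕ} (hp : Periodic p m) (j : ℕ) :
    arrivalTime p (j + m) = arrivalTime p j + arrivalTime p m := by
  induction j with
  | zero => simp
  | succ j ih =>
    rw [add_right_comm, arrivalTime_succ, ih, arrivalTime_succ, hp, add_right_comm j m 1, hp]
    ring

theorem arrivalTime_add_mul_period {m : ℕ} (hp : Periodic p m) (j k : ℕ) :
    arrivalTime p (j + k * m) = arrivalTime p j + k * arrivalTime p m := by
  induction k with
  | zero => simp
  | succ k ih =>
    rw [add_one_mul, ← add_assoc, arrivalTime_add_period hp, ih]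
    push_cast
    ring

open Fin.NatCast in
theorem Fin.sum_dist_add_one_eq_arrivalTime {n : ℕ} (q : Fin (n + 1) → X) :
    ∑ i, dist (q i) (q (i + 1)) = arrivalTime (fun j : ℕ => q j) (n + 1) := by
  rw [arrivalTime, ← Fin.sum_univ_eq_sum_range]
  simp

theorem exists_lt_arrivalTime_succ (hub : ∀ t, ∃ j, t < arrivalTime p j) (t : ℝ) :
    ∃ j, t < arrivalTime p (j + 1) ∧ (0 < j → arrivalTime p j ≤ t) := by
  have h : ∃ j, t < arrivalTime p (j + 1) :=
    let ⟨j, hj⟩ := hub t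
    ⟨j, hj.trans_le (arrivalTime_mono p j.le_succ)⟩
  refine ⟨Nat.find h, Nat.find_spec h, fun hpos => ?_⟩
  obtain ⟨i, hi⟩ := Nat.exists_eq_succ_of_ne_zero hpos.ne'
  rw [hi]
  exact le_of_not_gt (Nat.find_min h (by omega))

end ArrivalTime

theorem exists_lipschitzWith_one_apply_arrivalTime [MetricSpace X]
    (hgeo : ∀ x y : X, ∃ g : ℝ → X, LipschitzWith 1 g ∧ g 0 = x ∧ g (dist x y) = y)
    (p : ℕ → X) (hub : ∀ t, ∃ j, t < arrivalTime p j) :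
    ∃ F : ℝ → X, LipschitzWith 1 F ∧ ∀ j, F (arrivalTime p j) = p j := by
  set c := arrivalTime p
  choose g hg hg₀ hg₁ using fun j => hgeo (p j) (p (j + 1))
  choose J hJ_lt hJ_le using exists_lt_arrivalTime_succ hub
  -- at time `t` the robot walks along the leg from `p (J t)` to `p (J t + 1)`
  set F : ℝ → X := fun t => g (J t) (t - c (J t)) with hF
  have hnext : ∀ t, dist (F t) (p (J t + 1)) ≤ c (J t + 1) - t := fun t => by
    have hc := arrivalTime_succ p (J t)
    calc dist (F t) (p (J t + 1))
        = dist (g (J t) (t - c (J t))) (g (J t) (dist (p (J t)) (p (J t + 1)))) := by rw [hg₁]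
      _ ≤ _ := dist_le_sub_of_lipschitzWith_one (hg _) (by linarith [hJ_lt t])
      _ = _ := by linarith
  have hprev : ∀ t, 0 < J t → dist (p (J t)) (F t) ≤ t - c (J t) := fun t ht => by
    calc dist (p (J t)) (F t) = dist (g (J t) 0) (g (J t) (t - c (J t))) := by rw [hg₀]
      _ ≤ _ := dist_le_sub_of_lipschitzWith_one (hg _) (by linarith [hJ_le t ht])
      _ = _ := sub_zero _
  have hFst : ∀ s t, s ≤ t → dist (F s) (F t) ≤ t - s := by
    intro s t hst
    rcases lt_trichotomy (J s) (J t) with hlt | heq | hgt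
    · calc dist (F s) (F t)
          ≤ dist (F s) (p (J s + 1)) + dist (p (J s + 1)) (p (J t)) + dist (p (J t)) (F t) :=
            dist_triangle4 _ _ _ _
        _ ≤ (c (J s + 1) - s) + (c (J t) - c (J s + 1)) + (t - c (J t)) :=
            add_le_add_three (hnext s) (dist_le_arrivalTime_sub p hlt) (hprev t (by omega))
        _ = t - s := by ring
    · calc dist (F s) (F t) = dist (g (J s) (s - c (J s))) (g (J s) (t - c (J s))) := by
            rw [hF]; dsimp only; rw [heq]
        _ ≤ t - c (J s) - (s - c (J s)) := dist_le_sub_of_lipschitzWith_one (hg _) (by linarith)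
        _ = t - s := by ring
    · exact absurd (((hJ_le s (by omega)).trans hst).trans_lt (hJ_lt t))
        (not_lt.2 (arrivalTime_mono p hgt))
  refine ⟨F, lipschitzWith_one_of_dist_le_sub hFst, fun j => ?_⟩
  have hji : j ≤ J (c j) := by
    by_contra! h
    exact (hJ_lt (c j)).not_ge (arrivalTime_mono p h)
  have hc : c (J (c j)) = c j := by
    rcases Nat.eq_zero_or_pos (J (c j)) with h | h
    · rw [h, show j = 0 by omega]
    · exact le_antisymm (hJ_le _ h) (arrivalTime_mono p hji)
  have hpj : p (J (c j)) = p j :=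
    (dist_le_zero.1 (by linarith [dist_le_arrivalTime_sub p hji])).symm
  rw [← hpj, ← hg₀]
  simp only [hF, hc, sub_self]

theorem exists_nat_add_mul_mem_Icc {x t D : ℝ} (hD : 0 < D) (hx : x ≤ t + D) :
    ∃ k : ℕ, x + k * D ∈ Icc t (t + D) := by
  rcases le_total t x with htx | hxt
  · exact ⟨0, by simpa using ⟨htx, hx⟩⟩
  · have hceil := Nat.ceil_lt_add_one (div_nonneg (sub_nonneg.2 hxt) hD.le)
    have hlow := (div_le_iff₀ hD).1 (Nat.le_ceil ((t - x) / D))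
    have hup := mul_lt_mul_of_pos_right hceil hD
    rw [add_mul, div_mul_cancel₀ _ hD.ne', one_mul] at hup
    exact ⟨⌈(t - x) / D⌉₊, by linarith, by linarith⟩

theorem exists_schedule_of_periodic [MetricSpace X]
    (hgeo : ∀ x y : X, ∃ g : ℝ → X, LipschitzWith 1 g ∧ g 0 = x ∧ g (dist x y) = y)
    {p : ℕ → X} {m : ℕ} (hp : Periodic p m) {L : ℝ} (hL : arrivalTime p m ≤ L) :
    ∃ f : ℝ → X, LipschitzWith 1 f ∧
      ∀ j < m, ∀ t, 0 ≤ t → ∃ u ∈ Icc t (t + L), f u = p j := by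
  have hshift := arrivalTime_add_mul_period hp
  rcases (arrivalTime_nonneg p m).eq_or_lt with hD | hD
  · refine ⟨fun _ => p 0, LipschitzWith.const' (p 0),
      fun j hj t ht => ⟨t, ⟨le_rfl, by linarith⟩, ?_⟩⟩
    have hdist := dist_le_arrivalTime_sub p (Nat.zero_le j)
    rw [arrivalTime_zero, sub_zero] at hdist
    exact dist_le_zero.1 (by linarith [arrivalTime_mono p hj.le])
  · have hub : ∀ t, ∃ j, t < arrivalTime p j := fun t => by
      obtain ⟨k, hk⟩ := exists_nat_gt (t / arrivalTime p m)
      refine ⟨0 + k * m, ?_⟩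
      rw [hshift, arrivalTime_zero, zero_add]
      exact (div_lt_iff₀ hD).1 hk
    obtain ⟨F, hF, hFp⟩ := exists_lipschitzWith_one_apply_arrivalTime hgeo p hub
    refine ⟨F, hF, fun j hj t ht => ?_⟩
    obtain ⟨k, hk₁, hk₂⟩ := exists_nat_add_mul_mem_Icc hD
      ((arrivalTime_mono p hj.le).trans (le_add_of_nonneg_left ht))
    refine ⟨arrivalTime p (j + k * m), ?_, ?_⟩
    · rw [hshift]
      exact ⟨hk₁, by linarith⟩
    · rw [hFp]
      simpa using (hp.nat_mul k) j

end

open Fin.NatCast in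
theorem stmt_10_general {X : Type*} [MetricSpace X] (n : ℕ) (sites : Fin (n + 1) → X)
    (L : ℝ)
    (hgeo : ∀ x y : X, ∃ g : ℝ → X, LipschitzWith 1 g ∧ g 0 = x ∧ g (dist x y) = y) :
    (∃ f : ℝ → X, LipschitzWith 1 f ∧
        ∀ (i : Fin (n + 1)) (t : ℝ), 0 ≤ t → ∃ u ∈ Set.Icc t (t + L), f u = sites i) ↔
    (∃ σ : Equiv.Perm (Fin (n + 1)),
        ∑ i : Fin (n + 1), dist (sites (σ i)) (sites (σ (i + 1))) ≤ L) := by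
  constructor
  · rintro ⟨f, hf, hvis⟩
    exact exists_perm_sum_dist_le_of_schedule hf hvis
  · rintro ⟨σ, hσ⟩
    rw [Fin.sum_dist_add_one_eq_arrivalTime (fun i => sites (σ i))] at hσ
    obtain ⟨f, hf, hvis⟩ :=
      exists_schedule_of_periodic hgeo (periodic_natCast (fun i => sites (σ i))) hσ
    refine ⟨f, hf, fun i t ht => ?_⟩
    simpa using hvis (σ.symm i) (σ.symm i).isLt t ht

/-- For a single unit-speed robot in a metric space in which any two points can
be joined by a unit-speed path, there is a patrol schedule (a 1-Lipschitz
trajectory such that every site is visited in every time window of length `L`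
from time `0` on) of latency at most `L` for the sites `sites 0, …, sites n`
if and only if there is a closed tour (a cyclic ordering of the sites) of total
length at most `L`. -/
theorem stmt_10 {X : Type*} [MetricSpace X] (n : ℕ) (sites : Fin (n + 1) → X)
    (L : ℝ) (hL : 0 ≤ L)
    (hgeo : ∀ x y : X, ∃ g : ℝ → X, LipschitzWith 1 g ∧ g 0 = x ∧ g (dist x y) = y) :
    (∃ f : ℝ → X, LipschitzWith 1 f ∧
        ∀ (i : Fin (n + 1)) (t : ℝ), 0 ≤ t → ∃ u ∈ Set.Icc t (t + L), f u = sites i) ↔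
    (∃ σ : Equiv.Perm (Fin (n + 1)),
        ∑ i : Fin (n + 1), dist (sites (σ i)) (sites (σ (i + 1))) ≤ L) :=
  stmt_10_general n sites L hgeo
end
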